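/- arXiv:1901.11533 — 7 statements merged into one kernel-verified Lean document; each statement's English description precedes it below -/
import Mathlib

section
/- Let m ≥ 1 and let i_1 < i_2 be elements of {1,...,m} not in A ⊆ {1,...,m}. Let π be the transposition swapping i_1 and i_2. Then for every subset B of {1,...,m} with B < A ∪ {i_1} (in the total order), we have π(B) < A ∪ {i_2}. -/
private lemma lex_cons_cases {a b : ℕ} {s t : List ℕ}
    (h : List.Lex (· < ·) (a :: s) (b :: t)) :
    a < b ∨ (a = b ∧ List.Lex (· < ·) s t) := by
  cases h with
  | cons h' => exact Or.inr ⟨rfl, h'⟩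
  | rel h' => exact Or.inl h'

private lemma lex_iff_list : ∀ (l₁ l₂ : List ℕ),
    l₁.Pairwise (fun a b => b < a) → l₂.Pairwise (fun a b => b < a) →
    l₁.length = l₂.length →
    (List.Lex (· < ·) l₁ l₂ ↔
      ∃ w, w ∈ l₂ ∧ w ∉ l₁ ∧ ∀ a, w < a → (a ∈ l₁ ↔ a ∈ l₂))
  | [], [], _, _, _ => by
      simp [List.not_lex_nil]
  | [], b :: t, _, _, hlen => by simp at hlen
  | a :: s, [], _, _, hlen => by simp at hlen
  | a :: s, b :: t, h₁, h₂, hlen => by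
      have hs := List.pairwise_cons.1 h₁
      have ht := List.pairwise_cons.1 h₂
      have ih := lex_iff_list s t hs.2 ht.2 (by simpa using hlen)
      constructor
      · intro hlex
        rcases lex_cons_cases hlex with hab | ⟨rfl, hst⟩
        ·
            refine ⟨b, by simp, ?_, ?_⟩
            · simp only [List.mem_cons, not_or]
              exact ⟨fun h => by omega, fun h => by have := hs.1 b h; omega⟩
            · intro c hc
              have h1 : c ∉ a :: s := by
                simp only [List.mem_cons, not_or]
                exact ⟨fun h => by omega, fun h => by have := hs.1 c h; omega⟩
              have h2 : c ∉ b :: t := by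
                simp only [List.mem_cons, not_or]
                exact ⟨fun h => by omega, fun h => by have := ht.1 c h; omega⟩
              simp [h1, h2]
        · obtain ⟨w, hwt, hws, hcond⟩ := ih.1 hst
          have hwb : w < a := ht.1 w hwt
          refine ⟨w, by simp [hwt], ?_, ?_⟩
          · simp only [List.mem_cons, not_or]
            exact ⟨fun h => by omega, hws⟩
          · intro c hc
            have := hcond c hc
            simp only [List.mem_cons]
            tauto
      · rintro ⟨w, hwt, hws, hcond⟩
        simp only [List.mem_cons, not_or] at hws
        rcases List.mem_cons.1 hwt with rfl | hwt'
        · -- w = b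
          rcases lt_trichotomy a w with h | h | h
          · exact List.Lex.rel h
          · exact absurd h.symm hws.1
          · -- b < a : contradiction using hcond at a
            have : a ∈ w :: t := (hcond a h).1 (by simp)
            rcases List.mem_cons.1 this with rfl | h'
            · omega
            · have := ht.1 a h'; omega
        · -- w ∈ t
          have hwb : w < b := ht.1 w hwt'
          rcases lt_trichotomy a b with h | h | h
          · exact List.Lex.rel h
          case inr.inr =>
            exfalso
            have : a ∈ b :: t := (hcond a (by omega)).1 (by simp)
            rcases List.mem_cons.1 this with rfl | h'
            · omega
            · have := ht.1 a h'; omega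
          subst h
          refine List.Lex.cons (ih.2 ⟨w, hwt', hws.2, ?_⟩)
          intro c hc
          have hmem := hcond c hc
          constructor
          · intro hcs
            have : c ∈ a :: t := hmem.1 (by simp [hcs])
            rcases List.mem_cons.1 this with rfl | h'
            · have := hs.1 c hcs; omega
            · exact h'
          · intro hct
            have : c ∈ a :: s := hmem.2 (by simp [hct])
            rcases List.mem_cons.1 this with rfl | h'
            · have := ht.1 c hct; omega
            · exact h'

private lemma lex_iff_finset (S T : Finset ℕ) (h : S.card = T.card) :
    List.Lex (· < ·) ((S.sort (· ≤ ·)).reverse) ((T.sort (· ≤ ·)).reverse) ↔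
      ∃ w, w ∈ T ∧ w ∉ S ∧ ∀ a, w < a → (a ∈ S ↔ a ∈ T) := by
  have hp : ∀ U : Finset ℕ, ((U.sort (· ≤ ·)).reverse).Pairwise (fun a b => b < a) := by
    intro U
    rw [List.pairwise_reverse]
    exact U.sortedLT_sort.pairwise
  rw [lex_iff_list _ _ (hp S) (hp T) (by simp [h])]
  simp [Finset.mem_sort]

/-- Total order on subsets: `A < B` iff `|A| > |B|`, or equal cardinalities and the
decreasing enumeration of `A` is lexicographically smaller than that of `B`. -/
def subsetLT (A B : Finset ℕ) : Prop :=
  B.card < A.card ∨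
    (A.card = B.card ∧
      List.Lex (· < ·) ((A.sort (· ≤ ·)).reverse) ((B.sort (· ≤ ·)).reverse))

/-- For `i₁ < i₂` not in `A`, with `π` the transposition swapping `i₁, i₂`:
if `B < A ∪ {i₁}` then `π(B) < A ∪ {i₂}`. -/
theorem swap_image_subsetLT (m : ℕ) (hm : 1 ≤ m) (A : Finset ℕ)
    (hA : A ⊆ Finset.Icc 1 m) (i₁ i₂ : ℕ)
    (h₁ : i₁ ∈ Finset.Icc 1 m) (h₂ : i₂ ∈ Finset.Icc 1 m) (hlt : i₁ < i₂)
    (hn₁ : i₁ ∉ A) (hn₂ : i₂ ∉ A)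
    (B : Finset ℕ) (hB : B ⊆ Finset.Icc 1 m)
    (hBA : subsetLT B (insert i₁ A)) :
    subsetLT (B.image (Equiv.swap i₁ i₂)) (insert i₂ A) := by
  have hne : i₁ ≠ i₂ := hlt.ne
  have hc1 : (insert i₁ A).card = A.card + 1 := Finset.card_insert_of_notMem hn₁
  have hc2 : (insert i₂ A).card = A.card + 1 := Finset.card_insert_of_notMem hn₂
  have hcim : (B.image (Equiv.swap i₁ i₂)).card = B.card :=
    Finset.card_image_of_injective _ (Equiv.injective _)
  have hmem : ∀ a, a ∈ B.image (Equiv.swap i₁ i₂) ↔ Equiv.swap i₁ i₂ a ∈ B := by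
    intro a
    constructor
    · rw [Finset.mem_image]
      rintro ⟨b, hb, rfl⟩
      simpa [Equiv.swap_apply_self] using hb
    · intro h
      exact Finset.mem_image.2 ⟨_, h, Equiv.swap_apply_self _ _ _⟩
  rcases hBA with h | ⟨hcard, hlex⟩
  · left; omega
  · right
    refine ⟨by omega, ?_⟩
    rw [lex_iff_finset _ _ (by omega)] at hlex
    rw [lex_iff_finset _ _ (by omega)]
    obtain ⟨w, hwC, hwB, hcond⟩ := hlex
    have hwi2 : w ≠ i₂ := by
      rintro rfl
      rcases Finset.mem_insert.1 hwC with h | h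
      · exact hne h.symm
      · exact hn₂ h
    rcases lt_or_gt_of_ne hwi2 with hwlt | hwgt
    · -- w < i₂
      by_cases hi1B : i₁ ∈ B
      · -- w' = w
        have hwi1 : w ≠ i₁ := fun h => hwB (h ▸ hi1B)
        have hwA : w ∈ A := by
          rcases Finset.mem_insert.1 hwC with h | h
          · exact absurd h hwi1
          · exact h
        refine ⟨w, Finset.mem_insert_of_mem hwA, ?_, ?_⟩
        · rw [hmem, Equiv.swap_apply_of_ne_of_ne hwi1 hwi2]
          exact hwB
        · intro a ha
          by_cases hai1 : a = i₁
          · subst hai1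
            have hi2B : i₂ ∉ B := by
              intro h
              have := (hcond i₂ (by omega)).1 h
              rcases Finset.mem_insert.1 this with h' | h'
              · exact hne h'.symm
              · exact hn₂ h'
            rw [hmem, Equiv.swap_apply_left]
            simp [hi2B, hn₁, hne]
          · by_cases hai2 : a = i₂
            · subst hai2
              rw [hmem, Equiv.swap_apply_right]
              simp [hi1B]
            · rw [hmem, Equiv.swap_apply_of_ne_of_ne hai1 hai2]
              have := hcond a ha
              simp only [Finset.mem_insert] at this ⊢
              tauto
      · -- w' = i₂
        refine ⟨i₂, Finset.mem_insert_self _ _, ?_, ?_⟩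
        · rw [hmem, Equiv.swap_apply_right]
          exact hi1B
        · intro a ha
          have hai1 : a ≠ i₁ := by omega
          have hai2 : a ≠ i₂ := by omega
          rw [hmem, Equiv.swap_apply_of_ne_of_ne hai1 hai2]
          rw [Finset.mem_insert]
          have := hcond a (by omega)
          rw [Finset.mem_insert] at this
          have haA : a ∈ B ↔ a ∈ A := by tauto
          tauto
    · -- w > i₂ ; take w' = w
      have hwi1 : w ≠ i₁ := by omega
      have hwA : w ∈ A := by
        rcases Finset.mem_insert.1 hwC with h | h
        · exact absurd h hwi1
        · exact h
      refine ⟨w, Finset.mem_insert_of_mem hwA, ?_, ?_⟩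
      · rw [hmem, Equiv.swap_apply_of_ne_of_ne hwi1 hwi2]
        exact hwB
      · intro a ha
        have hai1 : a ≠ i₁ := by omega
        have hai2 : a ≠ i₂ := by omega
        rw [hmem, Equiv.swap_apply_of_ne_of_ne hai1 hai2]
        have := hcond a ha
        simp only [Finset.mem_insert] at this ⊢
        tauto
end

section
/- For any pair of discrete random variables (X, Y) with X uniform on {0,1} and Y taking values in a finite alphabet, the Bhattacharyya parameter satisfies (1 − H(X|Y))² ≤ 1 − Z(X|Y)², where H is conditional entropy in bits. -/
open Finset

/-- Conditional Shannon entropy (in bits) of `X` given `Y`, for a joint pmf `p`. -/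
noncomputable def condEnt {α β : Type} [Fintype α] [Fintype β] (p : α → β → ℝ) : ℝ :=
  -∑ y : β, ∑ x : α, p x y * Real.logb 2 (p x y / ∑ x' : α, p x' y)

/-- Bhattacharyya parameter `Z(X|Y) = ∑_y √(P(y|0)·P(y|1))` for `X` uniform on `{0,1}`
with joint pmf `p` (so `P(y|x) = 2·p x y`). -/
noncomputable def bhat {β : Type} [Fintype β] (p : Bool → β → ℝ) : ℝ :=
  ∑ y : β, Real.sqrt ((2 * p false y) * (2 * p true y))

open Real in
lemma binEntropy_ge (l : ℝ) (h0 : 0 ≤ l) (h1 : l ≤ 1) :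
    (1 - |2*l - 1|) * Real.log 2 ≤ Real.binEntropy l := by
  have conc := Real.strictConcave_binEntropy.concaveOn
  rcases le_total l (1/2) with h | h
  · have habs : |2*l - 1| = 1 - 2*l := by rw [abs_of_nonpos (by linarith)]; ring
    have H := conc.2 (show (0:ℝ) ∈ Set.Icc (0:ℝ) 1 by norm_num)
      (show (2⁻¹:ℝ) ∈ Set.Icc (0:ℝ) 1 by norm_num)
      (show (0:ℝ) ≤ 1 - 2*l by linarith) (show (0:ℝ) ≤ 2*l by linarith) (by ring)
    simp only [Real.binEntropy_zero, Real.binEntropy_two_inv, smul_eq_mul] at H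
    have hx : (1 - 2*l) * 0 + 2*l * 2⁻¹ = l := by ring
    rw [hx] at H
    rw [habs]; nlinarith
  · have habs : |2*l - 1| = 2*l - 1 := by rw [abs_of_nonneg (by linarith)]
    have H := conc.2 (show (2⁻¹:ℝ) ∈ Set.Icc (0:ℝ) 1 by norm_num)
      (show (1:ℝ) ∈ Set.Icc (0:ℝ) 1 by norm_num)
      (show (0:ℝ) ≤ 2 - 2*l by linarith) (show (0:ℝ) ≤ 2*l - 1 by linarith) (by ring)
    simp only [Real.binEntropy_one, Real.binEntropy_two_inv, smul_eq_mul] at H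
    have hx : (2 - 2*l) * 2⁻¹ + (2*l - 1) * 1 = l := by ring
    rw [hx] at H
    rw [habs]; nlinarith

open Real in
lemma key (a b : ℝ) (ha : 0 ≤ a) (hb : 0 ≤ b) :
    (a+b) - |a-b| ≤ -(a * Real.logb 2 (a/(a+b)) + b * Real.logb 2 (b/(a+b)))
    ∧ -(a * Real.logb 2 (a/(a+b)) + b * Real.logb 2 (b/(a+b))) ≤ a + b := by
  rcases eq_or_lt_of_le (by linarith : (0:ℝ) ≤ a + b) with hq | hq
  · have ha0 : a = 0 := by linarith
    have hb0 : b = 0 := by linarith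
    simp [ha0, hb0]
  · have hq' : a + b ≠ 0 := ne_of_gt hq
    have hba : 1 - a/(a+b) = b/(a+b) := by field_simp; ring
    have hE : (a+b) * Real.binEntropy (a/(a+b))
        = -(a * Real.log (a/(a+b)) + b * Real.log (b/(a+b))) := by
      rw [Real.binEntropy, hba, Real.log_inv, Real.log_inv]
      field_simp
      ring
    have hlogb : a * Real.logb 2 (a/(a+b)) + b * Real.logb 2 (b/(a+b))
        = (a * Real.log (a/(a+b)) + b * Real.log (b/(a+b))) / Real.log 2 := by
      simp [Real.logb]; ring
    have hlog2 : (0:ℝ) < Real.log 2 := Real.log_pos (by norm_num)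
    have hl0 : 0 ≤ a/(a+b) := div_nonneg ha hq.le
    have hl1 : a/(a+b) ≤ 1 := by rw [div_le_one hq]; linarith
    constructor
    · have hlow := binEntropy_ge (a/(a+b)) hl0 hl1
      have habs : (a+b) * |2*(a/(a+b)) - 1| = |a - b| := by
        have hd : 2*(a/(a+b)) - 1 = (a-b)/(a+b) := by field_simp; ring
        rw [hd, abs_div, abs_of_pos hq]
        field_simp
      have h2 : (a+b) * ((1 - |2*(a/(a+b)) - 1|) * Real.log 2)
          ≤ (a+b) * Real.binEntropy (a/(a+b)) :=
        mul_le_mul_of_nonneg_left hlow hq.le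
      rw [hE] at h2
      rw [hlogb, ← neg_div, le_div_iff₀ hlog2]
      nlinarith
    · have hup : Real.binEntropy (a/(a+b)) ≤ Real.log 2 := Real.binEntropy_le_log_two
      have h2 : (a+b) * Real.binEntropy (a/(a+b)) ≤ (a+b) * Real.log 2 :=
        mul_le_mul_of_nonneg_left hup hq.le
      rw [hE] at h2
      rw [hlogb, ← neg_div, div_le_iff₀ hlog2]
      nlinarith

/-- `(1 − H(X|Y))² ≤ 1 − Z(X|Y)²` for `X` uniform on `{0,1}`. -/
theorem sq_one_sub_condEnt_le {β : Type} [Fintype β] (p : Bool → β → ℝ)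
    (hp : ∀ x y, 0 ≤ p x y)
    (hsum : ∑ x : Bool, ∑ y : β, p x y = 1)
    (hunif : ∀ x : Bool, ∑ y : β, p x y = 1 / 2) :
    (1 - condEnt p) ^ 2 ≤ 1 - (bhat p) ^ 2 := by
  set d : β → ℝ := fun y => |p true y - p false y| with hd_def
  set z : β → ℝ := fun y => Real.sqrt ((2 * p false y) * (2 * p true y)) with hz_def
  have hq1 : ∑ y : β, (p true y + p false y) = 1 := by
    rw [Fintype.sum_bool] at hsum
    rw [Finset.sum_add_distrib, hsum]
  have hce : condEnt p = ∑ y : β,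
      -(p true y * Real.logb 2 (p true y / (p true y + p false y))
        + p false y * Real.logb 2 (p false y / (p true y + p false y))) := by
    rw [condEnt, ← Finset.sum_neg_distrib]
    apply Finset.sum_congr rfl
    intro y _
    simp [Fintype.sum_bool]
  have hkey := fun y => key (p true y) (p false y) (hp true y) (hp false y)
  set D : ℝ := ∑ y : β, d y with hD_def
  set Z : ℝ := bhat p with hZ_def
  have hdiff : 1 - condEnt p = ∑ y : β, ((p true y + p false y)
      - -(p true y * Real.logb 2 (p true y / (p true y + p false y))
        + p false y * Real.logb 2 (p false y / (p true y + p false y)))) := by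
    rw [hce, ← hq1, ← Finset.sum_sub_distrib]
  have hbd0 : 0 ≤ 1 - condEnt p := by
    rw [hdiff]
    apply Finset.sum_nonneg
    intro y _
    have := (hkey y).2
    linarith
  have hbd1 : 1 - condEnt p ≤ D := by
    rw [hdiff, hD_def]
    apply Finset.sum_le_sum
    intro y _
    have := (hkey y).1
    simp only [hd_def]
    linarith
  have hdnn : ∀ y, 0 ≤ d y := fun y => abs_nonneg _
  have hznn : ∀ y, 0 ≤ z y := fun y => Real.sqrt_nonneg _
  have hDnn : 0 ≤ D := Finset.sum_nonneg fun y _ => hdnn y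
  have hZnn : 0 ≤ Z := Finset.sum_nonneg fun y _ => hznn y
  set S : ℝ := Real.sqrt (D^2 + Z^2) with hS_def
  have hSnn : 0 ≤ S := Real.sqrt_nonneg _
  have hS2 : S^2 = D^2 + Z^2 := Real.sq_sqrt (by positivity)
  have hd2z2 : ∀ y, d y ^ 2 + z y ^ 2 = (p true y + p false y)^2 := by
    intro y
    have h1 : d y ^ 2 = (p true y - p false y)^2 := sq_abs _
    have h2 : z y ^ 2 = (2 * p false y) * (2 * p true y) :=
      Real.sq_sqrt (mul_nonneg (by linarith [hp false y]) (by linarith [hp true y]))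
    rw [h1, h2]; ring
  have claim : ∀ y, d y * D + z y * Z ≤ (p true y + p false y) * S := by
    intro y
    have h1 : (d y * D + z y * Z)^2 ≤ (d y ^ 2 + z y ^ 2) * (D^2 + Z^2) := by
      nlinarith [sq_nonneg (d y * Z - z y * D)]
    have h2 : (d y ^ 2 + z y ^ 2) * (D^2 + Z^2) = ((p true y + p false y) * S)^2 := by
      rw [hd2z2 y, mul_pow, hS2]
    have hnn1 : 0 ≤ d y * D + z y * Z :=
      add_nonneg (mul_nonneg (hdnn y) hDnn) (mul_nonneg (hznn y) hZnn)
    have hnn2 : 0 ≤ (p true y + p false y) * S :=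
      mul_nonneg (by linarith [hp true y, hp false y]) hSnn
    calc d y * D + z y * Z = Real.sqrt ((d y * D + z y * Z)^2) := (Real.sqrt_sq hnn1).symm
      _ ≤ Real.sqrt (((p true y + p false y) * S)^2) := Real.sqrt_le_sqrt (h1.trans_eq h2)
      _ = (p true y + p false y) * S := Real.sqrt_sq hnn2
  have hsumLHS : ∑ y : β, (d y * D + z y * Z) = D^2 + Z^2 := by
    rw [Finset.sum_add_distrib, ← Finset.sum_mul, ← Finset.sum_mul, ← hD_def]
    have : ∑ y : β, z y = Z := by rw [hZ_def, bhat]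
    rw [this]; ring
  have hT : D^2 + Z^2 ≤ S := by
    calc D^2 + Z^2 = ∑ y : β, (d y * D + z y * Z) := hsumLHS.symm
      _ ≤ ∑ y : β, (p true y + p false y) * S := Finset.sum_le_sum fun y _ => claim y
      _ = (∑ y : β, (p true y + p false y)) * S := by rw [Finset.sum_mul]
      _ = S := by rw [hq1, one_mul]
  have hT1 : D^2 + Z^2 ≤ 1 := by
    have h1 : S^2 ≤ S := by rw [hS2]; exact hT
    have h2 : (S - 1)^2 ≥ 0 := sq_nonneg _
    nlinarith
  have hfin : (1 - condEnt p)^2 ≤ D^2 := pow_le_pow_left₀ hbd0 hbd1 2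
  have hZsq : 0 ≤ Z^2 := sq_nonneg _
  linarith
end

section
/- Let (X₁,Y₁) and (X₂,Y₂) be i.i.d. pairs with X₁ uniform on {0,1} and Y₁ finite-valued. Then H(X₁ + X₂ | Y₁, Y₂) ≥ H(X₁ | Y₁) ≥ H(X₂ | X₁+X₂, Y₁, Y₂), and H(X₁+X₂ | Y₁, Y₂) + H(X₂ | X₁+X₂, Y₁, Y₂) = 2 H(X₁ | Y₁), where addition is mod 2 and H is conditional entropy. -/
open Finset

/-- Natural-log version of conditional entropy. -/
noncomputable def ent {α β : Type} [Fintype α] [Fintype β] (p : α → β → ℝ) : ℝ :=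
  -∑ y : β, ∑ x : α, p x y * Real.log (p x y / ∑ x' : α, p x' y)

lemma log_sum_le {ι : Type*} (s : Finset ι) (a b : ι → ℝ)
    (ha : ∀ i ∈ s, 0 ≤ a i) (hab : ∀ i ∈ s, a i ≤ b i) :
    (∑ i ∈ s, a i) * Real.log ((∑ i ∈ s, a i) / (∑ i ∈ s, b i)) ≤
      ∑ i ∈ s, a i * Real.log (a i / b i) := by
  set A := ∑ i ∈ s, a i with hA
  set B := ∑ i ∈ s, b i with hB
  have hA0 : 0 ≤ A := Finset.sum_nonneg ha
  have hAB : A ≤ B := Finset.sum_le_sum hab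
  rcases eq_or_lt_of_le hA0 with h | h
  · have hz : ∀ i ∈ s, a i = 0 := (Finset.sum_eq_zero_iff_of_nonneg ha).mp h.symm
    rw [← h, zero_mul]
    exact le_of_eq (Finset.sum_eq_zero (fun i hi => by rw [hz i hi, zero_mul])).symm
  · have hB0 : 0 < B := lt_of_lt_of_le h hAB
    have key : ∀ i ∈ s, a i * Real.log (A / B) + a i - b i * (A / B) ≤
        a i * Real.log (a i / b i) := by
      intro i hi
      rcases eq_or_lt_of_le (ha i hi) with h0 | h0
      · rw [← h0]
        have hb : 0 ≤ b i := le_trans (ha i hi) (hab i hi)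
        have : 0 ≤ b i * (A / B) := by positivity
        simp only [zero_mul, zero_add]
        linarith
      · have hb0 : 0 < b i := lt_of_lt_of_le h0 (hab i hi)
        have h1 : Real.log (b i * A / (a i * B)) ≤ b i * A / (a i * B) - 1 :=
          Real.log_le_sub_one_of_pos (by positivity)
        have h2 : Real.log (b i * A / (a i * B)) = Real.log (A / B) - Real.log (a i / b i) := by
          rw [Real.log_div (by positivity) (by positivity), Real.log_div h.ne' hB0.ne',
              Real.log_div h0.ne' hb0.ne', Real.log_mul hb0.ne' h.ne',
              Real.log_mul h0.ne' hB0.ne']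
          ring
        rw [h2] at h1
        have h3 := mul_le_mul_of_nonneg_left h1 h0.le
        have h4 : a i * (b i * A / (a i * B)) = b i * (A / B) := by
          field_simp
        nlinarith [h3, h4]
    have hsum := Finset.sum_le_sum key
    have : ∑ i ∈ s, (a i * Real.log (A / B) + a i - b i * (A / B)) = A * Real.log (A / B) := by
      rw [Finset.sum_sub_distrib, Finset.sum_add_distrib, ← Finset.sum_mul, ← Finset.sum_mul,
        ← hA, ← hB]
      field_simp
      ring
    linarith [this ▸ hsum]

lemma mul_log_split (u v a b : ℝ) (hu : 0 ≤ u) (hv : 0 ≤ v) (hua : u ≤ a) (hvb : v ≤ b) :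
    u * v * Real.log (u * v / (a * b)) =
      v * (u * Real.log (u / a)) + u * (v * Real.log (v / b)) := by
  rcases eq_or_lt_of_le hu with h | h
  · simp [← h]
  rcases eq_or_lt_of_le hv with h' | h'
  · simp [← h']
  have ha0 : 0 < a := lt_of_lt_of_le h hua
  have hb0 : 0 < b := lt_of_lt_of_le h' hvb
  rw [Real.log_div (by positivity) (by positivity), Real.log_mul h.ne' h'.ne',
      Real.log_mul ha0.ne' hb0.ne', Real.log_div h.ne' ha0.ne', Real.log_div h'.ne' hb0.ne']
  ring

lemma mul_log_chain (r q Q : ℝ) (hr : 0 ≤ r) (hrq : r ≤ q) (hqQ : q ≤ Q) :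
    r * Real.log (r / q) + r * Real.log (q / Q) = r * Real.log (r / Q) := by
  rcases eq_or_lt_of_le hr with h | h
  · simp [← h]
  have hq : 0 < q := lt_of_lt_of_le h hrq
  have hQ : 0 < Q := lt_of_lt_of_le hq hqQ
  rw [Real.log_div h.ne' hq.ne', Real.log_div hq.ne' hQ.ne', Real.log_div h.ne' hQ.ne']
  ring

open Finset

lemma sum_xor (f : Bool → ℝ) (c : Bool) : ∑ s : Bool, f (xor s c) = ∑ s : Bool, f s := by
  cases c <;> rw [Fintype.sum_bool, Fintype.sum_bool] <;> simp [add_comm]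

lemma scomm3 {ι₁ ι₂ ι₃ : Type*} [Fintype ι₁] [Fintype ι₂] [Fintype ι₃]
    (F : ι₁ → ι₂ → ι₃ → ℝ) :
    ∑ a : ι₁, ∑ b : ι₂, ∑ c : ι₃, F a b c = ∑ c : ι₃, ∑ a : ι₁, ∑ b : ι₂, F a b c := by
  trans ∑ a : ι₁, ∑ c : ι₃, ∑ b : ι₂, F a b c
  · exact Finset.sum_congr rfl fun a _ => Finset.sum_comm
  · exact Finset.sum_comm

lemma scomm4a {ι₁ ι₂ ι₃ ι₄ : Type*} [Fintype ι₁] [Fintype ι₂] [Fintype ι₃] [Fintype ι₄]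
    (F : ι₁ → ι₂ → ι₃ → ι₄ → ℝ) :
    ∑ a : ι₁, ∑ b : ι₂, ∑ c : ι₃, ∑ d : ι₄, F a b c d
      = ∑ d : ι₄, ∑ c : ι₃, ∑ a : ι₁, ∑ b : ι₂, F a b c d := by
  trans ∑ a : ι₁, ∑ d : ι₄, ∑ b : ι₂, ∑ c : ι₃, F a b c d
  · exact Finset.sum_congr rfl fun a _ => scomm3 _
  trans ∑ d : ι₄, ∑ a : ι₁, ∑ b : ι₂, ∑ c : ι₃, F a b c d
  · exact Finset.sum_comm
  · exact Finset.sum_congr rfl fun d _ => scomm3 _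

lemma scomm4b {ι₁ ι₂ ι₃ ι₄ : Type*} [Fintype ι₁] [Fintype ι₂] [Fintype ι₃] [Fintype ι₄]
    (F : ι₁ → ι₂ → ι₃ → ι₄ → ℝ) :
    ∑ a : ι₁, ∑ b : ι₂, ∑ c : ι₃, ∑ d : ι₄, F a b c d
      = ∑ b : ι₂, ∑ d : ι₄, ∑ a : ι₁, ∑ c : ι₃, F a b c d := by
  trans ∑ b : ι₂, ∑ a : ι₁, ∑ c : ι₃, ∑ d : ι₄, F a b c d
  · exact Finset.sum_comm
  · exact Finset.sum_congr rfl fun b _ => scomm3 _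

lemma ent_le {β : Type} [Fintype β] (p : Bool → β → ℝ)
    (hp : ∀ x y, 0 ≤ p x y) (hpsum : ∑ x : Bool, ∑ y : β, p x y = 1) :
    ent (fun x₂ (z : Bool × β × β) => p (xor z.1 x₂) z.2.1 * p x₂ z.2.2) ≤ ent p := by
  have hone : ∀ c : Bool, ∑ s : Bool, ∑ y : β, p (xor s c) y = 1 := fun c => by
    rw [sum_xor (fun s => ∑ y : β, p s y) c]; exact hpsum
  simp only [ent, neg_le_neg_iff, Fintype.sum_prod_type]
  -- goal : ∑ y, ∑ x, p x y * log (p x y / ∑ x', p x' y)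
  --   ≤ ∑ s, ∑ y₁, ∑ y₂, ∑ x₂, p (xor s x₂) y₁ * p x₂ y₂ * log (… / ∑ x', …)
  rw [scomm4a (fun (s : Bool) (y₁ : β) (y₂ : β) (x₂ : Bool) =>
      p (xor s x₂) y₁ * p x₂ y₂ *
        Real.log (p (xor s x₂) y₁ * p x₂ y₂ / ∑ x' : Bool, p (xor s x') y₁ * p x' y₂))]
  rw [Finset.sum_comm]
  refine Finset.sum_le_sum fun x₂ _ => Finset.sum_le_sum fun y₂ _ => ?_
  have key := log_sum_le (univ : Finset (Bool × β))
      (fun w => p (xor w.1 x₂) w.2 * p x₂ y₂)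
      (fun w => ∑ x' : Bool, p (xor w.1 x') w.2 * p x' y₂)
      (fun w _ => mul_nonneg (hp _ _) (hp _ _))
      (fun w _ => Finset.single_le_sum
        (f := fun x' => p (xor w.1 x') w.2 * p x' y₂)
        (fun x' _ => mul_nonneg (hp _ _) (hp _ _)) (mem_univ x₂))
  have hA : ∑ w : Bool × β, p (xor w.1 x₂) w.2 * p x₂ y₂ = p x₂ y₂ := by
    rw [← Finset.sum_mul, Fintype.sum_prod_type, hone x₂, one_mul]
  have hB : (∑ w : Bool × β, ∑ x' : Bool, p (xor w.1 x') w.2 * p x' y₂)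
      = ∑ x' : Bool, p x' y₂ := by
    rw [Fintype.sum_prod_type,
      scomm3 (fun (s : Bool) (y₁ : β) (x' : Bool) => p (xor s x') y₁ * p x' y₂)]
    refine Finset.sum_congr rfl fun x' _ => ?_
    have : ∀ s : Bool, ∑ y₁ : β, p (xor s x') y₁ * p x' y₂
        = (∑ y₁ : β, p (xor s x') y₁) * p x' y₂ := fun s => (Finset.sum_mul _ _ _).symm
    simp only [this, ← Finset.sum_mul, hone x', one_mul]
  rw [hA, hB] at key
  refine le_trans key (le_of_eq ?_)
  rw [Fintype.sum_prod_type]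

lemma ent_eq {β : Type} [Fintype β] (p : Bool → β → ℝ)
    (hp : ∀ x y, 0 ≤ p x y) (hpsum : ∑ x : Bool, ∑ y : β, p x y = 1) :
    ent (fun s (yy : β × β) => ∑ x₁ : Bool, p x₁ yy.1 * p (xor s x₁) yy.2)
      + ent (fun x₂ (z : Bool × β × β) => p (xor z.1 x₂) z.2.1 * p x₂ z.2.2)
      = 2 * ent p := by
  have hone : ∀ c : Bool, ∑ s : Bool, ∑ y : β, p (xor s c) y = 1 := fun c => by
    rw [sum_xor (fun s => ∑ y : β, p s y) c]; exact hpsum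
  -- basic pointwise facts
  have hq : ∀ (s : Bool) (y₁ y₂ : β),
      (∑ x₁ : Bool, p x₁ y₁ * p (xor s x₁) y₂)
        = ∑ x₂ : Bool, p (xor s x₂) y₁ * p x₂ y₂ := by
    intro s y₁ y₂
    cases s <;> rw [Fintype.sum_bool, Fintype.sum_bool] <;> simp <;> ring
  have hr0 : ∀ (s x₂ : Bool) (y₁ y₂ : β), 0 ≤ p (xor s x₂) y₁ * p x₂ y₂ :=
    fun s x₂ y₁ y₂ => mul_nonneg (hp _ _) (hp _ _)
  have hrq : ∀ (s x₂ : Bool) (y₁ y₂ : β),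
      p (xor s x₂) y₁ * p x₂ y₂ ≤ ∑ x' : Bool, p (xor s x') y₁ * p x' y₂ :=
    fun s x₂ y₁ y₂ => Finset.single_le_sum
      (f := fun x' => p (xor s x') y₁ * p x' y₂)
      (fun x' _ => hr0 s x' y₁ y₂) (mem_univ x₂)
  have hQ : ∀ (y₁ y₂ : β),
      (∑ s : Bool, ∑ x' : Bool, p (xor s x') y₁ * p x' y₂)
        = (∑ x : Bool, p x y₁) * (∑ x : Bool, p x y₂) := by
    intro y₁ y₂
    simp only [Fintype.sum_bool]
    simp
    ring
  have hqQ : ∀ (s : Bool) (y₁ y₂ : β),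
      (∑ x' : Bool, p (xor s x') y₁ * p x' y₂)
        ≤ (∑ x : Bool, p x y₁) * (∑ x : Bool, p x y₂) := by
    intro s y₁ y₂
    rw [← hQ y₁ y₂]
    exact Finset.single_le_sum
      (f := fun s' => ∑ x' : Bool, p (xor s' x') y₁ * p x' y₂)
      (fun s' _ => Finset.sum_nonneg fun x' _ => hr0 s' x' y₁ y₂) (mem_univ s)
  simp only [ent, Fintype.sum_prod_type]
  have key :
      (∑ y₁ : β, ∑ y₂ : β, ∑ s : Bool,
        (∑ x₁ : Bool, p x₁ y₁ * p (xor s x₁) y₂) *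
          Real.log ((∑ x₁ : Bool, p x₁ y₁ * p (xor s x₁) y₂) /
            ∑ s' : Bool, ∑ x₁ : Bool, p x₁ y₁ * p (xor s' x₁) y₂))
      + (∑ s : Bool, ∑ y₁ : β, ∑ y₂ : β, ∑ x₂ : Bool,
        p (xor s x₂) y₁ * p x₂ y₂ *
          Real.log (p (xor s x₂) y₁ * p x₂ y₂ /
            ∑ x' : Bool, p (xor s x') y₁ * p x' y₂))
      = 2 * ∑ y : β, ∑ x : Bool, p x y * Real.log (p x y / ∑ x' : Bool, p x' y) := by
    -- rewrite the q-sums into x₂ form, and the denominator ∑ s' into the product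
    have stepq : (∑ y₁ : β, ∑ y₂ : β, ∑ s : Bool,
        (∑ x₁ : Bool, p x₁ y₁ * p (xor s x₁) y₂) *
          Real.log ((∑ x₁ : Bool, p x₁ y₁ * p (xor s x₁) y₂) /
            ∑ s' : Bool, ∑ x₁ : Bool, p x₁ y₁ * p (xor s' x₁) y₂))
        = ∑ s : Bool, ∑ y₁ : β, ∑ y₂ : β, ∑ x₂ : Bool,
          p (xor s x₂) y₁ * p x₂ y₂ *
            Real.log ((∑ x' : Bool, p (xor s x') y₁ * p x' y₂) /
              ((∑ x : Bool, p x y₁) * (∑ x : Bool, p x y₂))) := by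
      rw [scomm3 (fun (y₁ y₂ : β) (s : Bool) =>
        (∑ x₁ : Bool, p x₁ y₁ * p (xor s x₁) y₂) *
          Real.log ((∑ x₁ : Bool, p x₁ y₁ * p (xor s x₁) y₂) /
            ∑ s' : Bool, ∑ x₁ : Bool, p x₁ y₁ * p (xor s' x₁) y₂))]
      refine Finset.sum_congr rfl fun s _ => Finset.sum_congr rfl fun y₁ _ =>
        Finset.sum_congr rfl fun y₂ _ => ?_
      simp only [hq]
      rw [hQ y₁ y₂, Finset.sum_mul]
    rw [stepq]
    -- combine the two quadruple sums
    rw [← Finset.sum_add_distrib]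
    have mid : ∀ s : Bool,
        ((∑ y₁ : β, ∑ y₂ : β, ∑ x₂ : Bool,
          p (xor s x₂) y₁ * p x₂ y₂ *
            Real.log ((∑ x' : Bool, p (xor s x') y₁ * p x' y₂) /
              ((∑ x : Bool, p x y₁) * (∑ x : Bool, p x y₂))))
        + ∑ y₁ : β, ∑ y₂ : β, ∑ x₂ : Bool,
          p (xor s x₂) y₁ * p x₂ y₂ *
            Real.log (p (xor s x₂) y₁ * p x₂ y₂ /
              ∑ x' : Bool, p (xor s x') y₁ * p x' y₂))
        = ∑ y₁ : β, ∑ y₂ : β, ∑ x₂ : Bool,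
          (p x₂ y₂ * (p (xor s x₂) y₁ * Real.log (p (xor s x₂) y₁ / ∑ x : Bool, p x y₁))
           + p (xor s x₂) y₁ * (p x₂ y₂ * Real.log (p x₂ y₂ / ∑ x : Bool, p x y₂))) := by
      intro s
      rw [← Finset.sum_add_distrib]
      refine Finset.sum_congr rfl fun y₁ _ => ?_
      rw [← Finset.sum_add_distrib]
      refine Finset.sum_congr rfl fun y₂ _ => ?_
      rw [← Finset.sum_add_distrib]
      refine Finset.sum_congr rfl fun x₂ _ => ?_
      rw [add_comm]
      rw [mul_log_chain (p (xor s x₂) y₁ * p x₂ y₂)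
        (∑ x' : Bool, p (xor s x') y₁ * p x' y₂)
        ((∑ x : Bool, p x y₁) * (∑ x : Bool, p x y₂))
        (hr0 s x₂ y₁ y₂) (hrq s x₂ y₁ y₂) (hqQ s y₁ y₂)]
      exact mul_log_split (p (xor s x₂) y₁) (p x₂ y₂)
        (∑ x : Bool, p x y₁) (∑ x : Bool, p x y₂)
        (hp _ _) (hp _ _)
        (Finset.single_le_sum (f := fun x => p x y₁) (fun x _ => hp x y₁) (mem_univ _))
        (Finset.single_le_sum (f := fun x => p x y₂) (fun x _ => hp x y₂) (mem_univ _))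
    simp only [mid]
    -- split into the two parts
    simp only [Finset.sum_add_distrib]
    have part1 : (∑ s : Bool, ∑ y₁ : β, ∑ y₂ : β, ∑ x₂ : Bool,
        p x₂ y₂ * (p (xor s x₂) y₁ * Real.log (p (xor s x₂) y₁ / ∑ x : Bool, p x y₁)))
        = ∑ y : β, ∑ x : Bool, p x y * Real.log (p x y / ∑ x' : Bool, p x' y) := by
      rw [scomm4b (fun (s : Bool) (y₁ y₂ : β) (x₂ : Bool) =>
        p x₂ y₂ * (p (xor s x₂) y₁ * Real.log (p (xor s x₂) y₁ / ∑ x : Bool, p x y₁)))]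
      refine Finset.sum_congr rfl fun y₁ _ => ?_
      -- now: ∑ x₂, ∑ s, ∑ y₂, p x₂ y₂ * c(s,x₂)
      have inner : ∀ x₂ s : Bool, (∑ y₂ : β,
          p x₂ y₂ * (p (xor s x₂) y₁ * Real.log (p (xor s x₂) y₁ / ∑ x : Bool, p x y₁)))
          = (∑ y₂ : β, p x₂ y₂) *
            (p (xor s x₂) y₁ * Real.log (p (xor s x₂) y₁ / ∑ x : Bool, p x y₁)) :=
        fun x₂ s => (Finset.sum_mul _ _ _).symm
      simp only [inner]
      have inner2 : ∀ x₂ : Bool, (∑ s : Bool, (∑ y₂ : β, p x₂ y₂) *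
          (p (xor s x₂) y₁ * Real.log (p (xor s x₂) y₁ / ∑ x : Bool, p x y₁)))
          = (∑ y₂ : β, p x₂ y₂) *
            ∑ x : Bool, p x y₁ * Real.log (p x y₁ / ∑ x' : Bool, p x' y₁) := by
        intro x₂
        rw [← Finset.mul_sum]
        congr 1
        exact sum_xor (fun x => p x y₁ * Real.log (p x y₁ / ∑ x' : Bool, p x' y₁)) x₂
      simp only [inner2]
      rw [← Finset.sum_mul, hpsum, one_mul]
    have part2 : (∑ s : Bool, ∑ y₁ : β, ∑ y₂ : β, ∑ x₂ : Bool,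
        p (xor s x₂) y₁ * (p x₂ y₂ * Real.log (p x₂ y₂ / ∑ x : Bool, p x y₂)))
        = ∑ y : β, ∑ x : Bool, p x y * Real.log (p x y / ∑ x' : Bool, p x' y) := by
      rw [scomm4a (fun (s : Bool) (y₁ y₂ : β) (x₂ : Bool) =>
        p (xor s x₂) y₁ * (p x₂ y₂ * Real.log (p x₂ y₂ / ∑ x : Bool, p x y₂)))]
      rw [Finset.sum_comm]
      refine Finset.sum_congr rfl fun y₂ _ => Finset.sum_congr rfl fun x₂ _ => ?_
      have inner : ∀ s : Bool, (∑ y₁ : β,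
          p (xor s x₂) y₁ * (p x₂ y₂ * Real.log (p x₂ y₂ / ∑ x : Bool, p x y₂)))
          = (∑ y₁ : β, p (xor s x₂) y₁) *
            (p x₂ y₂ * Real.log (p x₂ y₂ / ∑ x : Bool, p x y₂)) :=
        fun s => (Finset.sum_mul _ _ _).symm
      simp only [inner, ← Finset.sum_mul, hone x₂, one_mul]
    rw [part1, part2]
    ring
  linarith [key]

lemma condEnt_eq_ent {α β : Type} [Fintype α] [Fintype β] (p : α → β → ℝ) :
    condEnt p = ent p / Real.log 2 := by
  simp only [condEnt, ent, Real.logb, ← mul_div_assoc, ← Finset.sum_div, neg_div]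




open Finset

/-- For i.i.d. pairs `(X₁,Y₁)`, `(X₂,Y₂)` with uniform binary inputs:
`H(X₁+X₂|Y₁,Y₂) ≥ H(X₁|Y₁) ≥ H(X₂|X₁+X₂,Y₁,Y₂)`, and
`H(X₁+X₂|Y₁,Y₂) + H(X₂|X₁+X₂,Y₁,Y₂) = 2·H(X₁|Y₁)`.
The joint pmf of `(X₁+X₂ ; (Y₁,Y₂))` is `s,(y₁,y₂) ↦ ∑_{x₁} p x₁ y₁ * p (s xor x₁) y₂`
and the joint pmf of `(X₂ ; (X₁+X₂,Y₁,Y₂))` is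
`x₂,(s,y₁,y₂) ↦ p (s xor x₂) y₁ * p x₂ y₂`. -/
theorem condEnt_polar_triplet {β : Type} [Fintype β] (p : Bool → β → ℝ)
    (hp : ∀ x y, 0 ≤ p x y)
    (hpsum : ∑ x : Bool, ∑ y : β, p x y = 1)
    (hpu : ∀ x : Bool, ∑ y : β, p x y = 1 / 2) :
    condEnt p ≤
        condEnt (fun s (yy : β × β) => ∑ x₁ : Bool, p x₁ yy.1 * p (xor s x₁) yy.2) ∧
    condEnt (fun x₂ (z : Bool × β × β) => p (xor z.1 x₂) z.2.1 * p x₂ z.2.2)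
        ≤ condEnt p ∧
    condEnt (fun s (yy : β × β) => ∑ x₁ : Bool, p x₁ yy.1 * p (xor s x₁) yy.2)
        + condEnt (fun x₂ (z : Bool × β × β) => p (xor z.1 x₂) z.2.1 * p x₂ z.2.2)
      = 2 * condEnt p := by
  have h2 : (0:ℝ) < Real.log 2 := Real.log_pos (by norm_num)
  have hE := ent_eq p hp hpsum
  have hL := ent_le p hp hpsum
  simp only [condEnt_eq_ent]
  refine ⟨?_, ?_, ?_⟩
  · have : ent p ≤ ent (fun s (yy : β × β) => ∑ x₁ : Bool, p x₁ yy.1 * p (xor s x₁) yy.2) := by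
      linarith
    exact div_le_div_of_nonneg_right this h2.le
  · exact div_le_div_of_nonneg_right hL h2.le
  · rw [← add_div, hE]; ring
end

section
/- (Strict polarization.) For every ε > 0 there exists δ(ε) > 0 such that for any independent pair of random variables (X₁,Y₁), (X₂,Y₂) with X₁, X₂ binary, if H(X₁|Y₁) ∈ (ε, 1−ε) and H(X₂|Y₂) ∈ (ε, 1−ε), then H(X₁+X₂ | Y₁, Y₂) ≥ max(H(X₁|Y₁), H(X₂|Y₂)) + δ(ε), where addition is mod 2. -/
open Finset

open Real

/-- `log ((1+z)/(1-z)) ≥ 2z` for `z ∈ [0,1)`. -/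
lemma log_ratio_ge (z : ℝ) (h0 : 0 ≤ z) (h1 : z < 1) :
    2 * z ≤ Real.log (1 + z) - Real.log (1 - z) := by
  set g : ℝ → ℝ := fun t => Real.log (1 + t) - Real.log (1 - t) - 2 * t with hg
  have key : MonotoneOn g (Set.Ico (0:ℝ) 1) := by
    have hder : ∀ t ∈ Set.Ioo (0:ℝ) 1, HasDerivAt g (1/(1+t) + 1/(1-t) - 2) t := by
      intro t ht
      have h1t : (1:ℝ) + t ≠ 0 := by nlinarith [ht.1]
      have h2t : (1:ℝ) - t ≠ 0 := by nlinarith [ht.2]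
      have d1 : HasDerivAt (fun t : ℝ => Real.log (1 + t)) (1/(1+t)) t := by
        have := (Real.hasDerivAt_log h1t).comp t ((hasDerivAt_id t).const_add 1)
        simpa [Function.comp_def] using this
      have d2 : HasDerivAt (fun t : ℝ => Real.log (1 - t)) (-(1/(1-t))) t := by
        have h := (Real.hasDerivAt_log h2t).comp t ((hasDerivAt_id t).const_sub 1)
        simpa [Function.comp_def, one_div] using h
      have d3 : HasDerivAt (fun t : ℝ => (2:ℝ) * t) 2 t := by
        simpa using (hasDerivAt_id t).const_mul (2:ℝ)
      have := (d1.sub d2).sub d3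
      exact this.congr_deriv (by ring)
    apply monotoneOn_of_deriv_nonneg (convex_Ico 0 1)
    · apply ContinuousOn.sub
      apply ContinuousOn.sub
      · exact (Real.continuousOn_log.comp (by fun_prop) (by intro x hx; simp; nlinarith [hx.1]))
      · exact (Real.continuousOn_log.comp (by fun_prop) (by intro x hx; simp; intro h; nlinarith [hx.2, h]))
      · fun_prop
    · intro t ht
      rw [interior_Ico] at ht
      exact (hder t ht).differentiableAt.differentiableWithinAt
    · intro t ht
      rw [interior_Ico] at ht
      rw [(hder t ht).deriv]
      have h1 : (0:ℝ) < 1 + t := by nlinarith [ht.1]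
      have h2 : (0:ℝ) < 1 - t := by nlinarith [ht.2]
      have heq : 1/(1+t) + 1/(1-t) - 2 = 2*t^2 / ((1+t)*(1-t)) := by field_simp; ring
      rw [heq]
      positivity
  have h := key (Set.mem_Ico.2 ⟨le_refl 0, by norm_num⟩) (Set.mem_Ico.2 ⟨h0, h1⟩) h0
  simp only [hg] at h
  simp at h
  linarith [h]

/-- `binEntropy t + (1-2t)²/2` is monotone on `[0, 1/2]`. -/
lemma F_mono : MonotoneOn (fun t : ℝ => binEntropy t + (1 - 2*t)^2/2) (Set.Icc (0:ℝ) (1/2)) := by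
  have hder : ∀ t ∈ Set.Ioo (0:ℝ) (1/2), HasDerivAt (fun t : ℝ => binEntropy t + (1 - 2*t)^2/2)
      ((Real.log (1 - t) - Real.log t) - 2*(1 - 2*t)) t := by
    intro t ht
    have d1 : HasDerivAt binEntropy (Real.log (1 - t) - Real.log t) t :=
      Real.hasDerivAt_binEntropy (ne_of_gt ht.1) (by intro h; rw [h] at ht; linarith [ht.2])
    have d2 : HasDerivAt (fun t : ℝ => (1 - 2*t)^2/2) (-2*(1 - 2*t)) t := by
      have : HasDerivAt (fun t : ℝ => (1 - 2*t)) (-2) t := by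
        simpa using ((hasDerivAt_id t).const_mul (2:ℝ)).const_sub 1
      have := (this.pow 2).div_const 2
      exact this.congr_deriv (by ring)
    have := d1.add d2
    exact this.congr_deriv (by ring)
  apply monotoneOn_of_deriv_nonneg (convex_Icc 0 (1/2))
  · exact (Real.binEntropy_continuous.continuousOn.add (by fun_prop))
  · intro t ht
    rw [interior_Icc] at ht
    exact (hder t ht).differentiableAt.differentiableWithinAt
  · intro t ht
    rw [interior_Icc] at ht
    rw [(hder t ht).deriv]
    have hz0 : (0:ℝ) ≤ 1 - 2*t := by linarith [ht.2]
    have hz1 : 1 - 2*t < 1 := by linarith [ht.1]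
    have hlog := log_ratio_ge (1 - 2*t) hz0 hz1
    have e1 : (1:ℝ) + (1 - 2*t) = 2*(1-t) := by ring
    have e2 : (1:ℝ) - (1 - 2*t) = 2*t := by ring
    rw [e1, e2, Real.log_mul (by norm_num) (by linarith [ht.2] : (1:ℝ)-t ≠ 0),
      Real.log_mul (by norm_num) (ne_of_gt ht.1)] at hlog
    linarith

/-- Monotone-gap form: if `(1-2y)² ≤ (1-2x)²` then `binEntropy y - binEntropy x ≥ ((1-2x)²-(1-2y)²)/2`. -/
lemma gap_lemma {x y : ℝ} (hx : x ∈ Set.Icc (0:ℝ) 1) (hy : y ∈ Set.Icc (0:ℝ) 1)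
    (h : (1-2*y)^2 ≤ (1-2*x)^2) :
    binEntropy x + (1-2*x)^2/2 ≤ binEntropy y + (1-2*y)^2/2 := by
  obtain ⟨hx0, hx1⟩ := hx
  obtain ⟨hy0, hy1⟩ := hy
  set x' := if x ≤ 1/2 then x else 1 - x with hx'
  set y' := if y ≤ 1/2 then y else 1 - y with hy'
  have hxF : binEntropy x + (1-2*x)^2/2 = binEntropy x' + (1-2*x')^2/2 := by
    rw [hx']; split_ifs with h'
    · rfl
    · rw [Real.binEntropy_one_sub]; ring_nf
  have hyF : binEntropy y + (1-2*y)^2/2 = binEntropy y' + (1-2*y')^2/2 := by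
    rw [hy']; split_ifs with h'
    · rfl
    · rw [Real.binEntropy_one_sub]; ring_nf
  have hx'm : x' ∈ Set.Icc (0:ℝ) (1/2) := by
    rw [hx']; split_ifs with h' <;> constructor <;> linarith
  have hy'm : y' ∈ Set.Icc (0:ℝ) (1/2) := by
    rw [hy']; split_ifs with h' <;> constructor <;> linarith
  have hsx : (1-2*x')^2 = (1-2*x)^2 := by rw [hx']; split_ifs <;> ring
  have hsy : (1-2*y')^2 = (1-2*y)^2 := by rw [hy']; split_ifs <;> ring
  have hle : x' ≤ y' := by
    have h2 : (1-2*y')^2 ≤ (1-2*x')^2 := by rw [hsx, hsy]; exact h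
    have b1 : 0 ≤ 1 - 2*x' := by linarith [hx'm.2]
    have b2 : 0 ≤ 1 - 2*y' := by linarith [hy'm.2]
    nlinarith
  rw [hxF, hyF]
  exact F_mono hx'm hy'm hle

/-- `log 2 - binEntropy a ≤ (1-2a)²` for `a ∈ [0,1]`. -/
lemma deficiency_le {a : ℝ} (ha : a ∈ Set.Icc (0:ℝ) 1) : Real.log 2 - binEntropy a ≤ (1-2*a)^2 := by
  obtain ⟨ha0, ha1⟩ := ha
  rcases eq_or_lt_of_le ha0 with h0 | h0
  · simp [← h0]
    nlinarith [Real.log_le_sub_one_of_pos (by norm_num : (0:ℝ) < 2)]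
  rcases eq_or_lt_of_le ha1 with h1 | h1
  · simp [h1]
    nlinarith [Real.log_le_sub_one_of_pos (by norm_num : (0:ℝ) < 2)]
  have key : Real.log 2 - binEntropy a = a * Real.log (2*a) + (1-a) * Real.log (2*(1-a)) := by
    rw [Real.binEntropy]
    rw [Real.log_mul (by norm_num) (ne_of_gt h0), Real.log_mul (by norm_num) (by linarith : (1:ℝ)-a ≠ 0),
      Real.log_inv, Real.log_inv]
    ring
  rw [key]
  have b1 : Real.log (2*a) ≤ 2*a - 1 := Real.log_le_sub_one_of_pos (by linarith)
  have b2 : Real.log (2*(1-a)) ≤ 2*(1-a) - 1 := Real.log_le_sub_one_of_pos (by linarith)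
  nlinarith

/-- `(binEntropy b)² ≤ 16 b (1-b) = 4(1-(1-2b)²)` for `b ∈ [0,1]`. -/
lemma binEntropy_sq_le {b : ℝ} (hb : b ∈ Set.Icc (0:ℝ) 1) :
    (binEntropy b)^2 ≤ 4*(1 - (1-2*b)^2) := by
  obtain ⟨hb0, hb1⟩ := hb
  have term : ∀ t : ℝ, 0 ≤ t → t ≤ 1 → t * Real.log t⁻¹ ≤ 2 * Real.sqrt t * (1 - t) := by
    intro t ht0 ht1
    rcases eq_or_lt_of_le ht0 with h | h
    · simp [← h]
    have hs : (0:ℝ) < Real.sqrt t := Real.sqrt_pos.2 h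
    have hsq : Real.sqrt t * Real.sqrt t = t := Real.mul_self_sqrt (le_of_lt h)
    have hs1 : Real.sqrt t ≤ 1 := by
      nlinarith
    have hlog : Real.log t = 2 * Real.log (Real.sqrt t) := by
      rw [Real.log_sqrt (le_of_lt h)]; ring
    have hlb : 1 - (Real.sqrt t)⁻¹ ≤ Real.log (Real.sqrt t) := by
      have := Real.log_le_sub_one_of_pos (show (0:ℝ) < (Real.sqrt t)⁻¹ by positivity)
      rw [Real.log_inv] at this
      linarith
    have step : t * Real.log t⁻¹ ≤ 2 * t * ((Real.sqrt t)⁻¹ - 1) := by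
      rw [Real.log_inv, hlog]
      nlinarith
    refine le_trans step ?_
    have e : 2 * t * ((Real.sqrt t)⁻¹ - 1) = 2 * Real.sqrt t * (1 - Real.sqrt t) := by
      field_simp
      nlinarith
    rw [e]
    nlinarith
  have h1 := term b hb0 hb1
  have h2 := term (1-b) (by linarith) (by linarith)
  have e2 : (1:ℝ) - (1 - b) = b := by ring
  rw [e2] at h2
  have key : binEntropy b ≤ 4 * Real.sqrt (b*(1-b)) := by
    rw [Real.binEntropy]
    have hstep1 : 1 - b ≤ Real.sqrt (1-b) := by
      have hle : Real.sqrt (1-b) ≤ 1 := by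
        nlinarith [Real.sqrt_nonneg (1-b), Real.mul_self_sqrt (show (0:ℝ) ≤ 1-b by linarith)]
      nlinarith [Real.sqrt_nonneg (1-b), Real.mul_self_sqrt (show (0:ℝ) ≤ 1-b by linarith)]
    have hstep2 : b ≤ Real.sqrt b := by
      have hle : Real.sqrt b ≤ 1 := by
        nlinarith [Real.sqrt_nonneg b, Real.mul_self_sqrt hb0]
      nlinarith [Real.sqrt_nonneg b, Real.mul_self_sqrt hb0]
    have m1 : Real.sqrt b * (1 - b) ≤ Real.sqrt (b*(1-b)) := by
      rw [Real.sqrt_mul hb0]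
      exact mul_le_mul_of_nonneg_left hstep1 (Real.sqrt_nonneg b)
    have m2 : Real.sqrt (1-b) * b ≤ Real.sqrt (b*(1-b)) := by
      rw [Real.sqrt_mul hb0]
      calc Real.sqrt (1-b) * b ≤ Real.sqrt (1-b) * Real.sqrt b :=
            mul_le_mul_of_nonneg_left hstep2 (Real.sqrt_nonneg (1-b))
        _ = Real.sqrt b * Real.sqrt (1-b) := mul_comm _ _
    nlinarith
  have hnn : 0 ≤ binEntropy b := Real.binEntropy_nonneg hb0 hb1
  have hsq : Real.sqrt (b*(1-b)) ^ 2 = b*(1-b) := Real.sq_sqrt (by nlinarith)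
  nlinarith [Real.sqrt_nonneg (b*(1-b))]

/-- Key pointwise inequality: entropy gain of the convolution. -/
lemma pointwise_gain {a b : ℝ} (ha : a ∈ Set.Icc (0:ℝ) 1) (hb : b ∈ Set.Icc (0:ℝ) 1) :
    binEntropy a + (1/8) * (Real.log 2 - binEntropy a) * (binEntropy b)^2
      ≤ binEntropy (a + b - 2*a*b) := by
  set c := a + b - 2*a*b with hc
  have hcm : c ∈ Set.Icc (0:ℝ) 1 := by
    constructor
    · nlinarith [ha.1, ha.2, hb.1, hb.2]
    · nlinarith [ha.1, ha.2, hb.1, hb.2]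
  have hzc : (1-2*c)^2 = (1-2*a)^2 * (1-2*b)^2 := by rw [hc]; ring
  have hble : (1-2*b)^2 ≤ 1 := by nlinarith [hb.1, hb.2]
  have hgap : (1-2*a)^2 * (1 - (1-2*b)^2) / 2 ≤ binEntropy c - binEntropy a := by
    have := gap_lemma ha hcm (by rw [hzc]; nlinarith [sq_nonneg (1-2*a)])
    rw [hzc] at this
    nlinarith
  have hL1 := deficiency_le ha
  have hL3 := binEntropy_sq_le hb
  have hnn1 : 0 ≤ Real.log 2 - binEntropy a := by linarith [Real.binEntropy_le_log_two (p := a)]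
  have hnn3 : 0 ≤ (binEntropy b)^2 := sq_nonneg _
  have hnnz : 0 ≤ 1 - (1-2*b)^2 := by linarith
  have hprod : (Real.log 2 - binEntropy a) * (binEntropy b)^2 ≤ (1-2*a)^2 * (4*(1 - (1-2*b)^2)) :=
    mul_le_mul hL1 hL3 hnn3 (sq_nonneg _)
  nlinarith

lemma perY (p0 p1 : ℝ) (h0 : 0 ≤ p0) (h1 : 0 ≤ p1) :
    -(p0 * Real.log (p0/(p0+p1)) + p1 * Real.log (p1/(p0+p1)))
      = (p0+p1) * binEntropy (p1/(p0+p1)) := by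
  rcases eq_or_lt_of_le (by linarith : (0:ℝ) ≤ p0 + p1) with hS | hS
  · have hp0 : p0 = 0 := by linarith
    have hp1 : p1 = 0 := by linarith
    simp [hp0, hp1]
  have hSne : p0 + p1 ≠ 0 := ne_of_gt hS
  have h1S : 1 - p1/(p0+p1) = p0/(p0+p1) := by field_simp; ring
  rw [Real.binEntropy, h1S, Real.log_inv, Real.log_inv]
  field_simp
  ring

/-- `condEnt` in terms of per-symbol binary entropies (natural log scale). -/
lemma condEnt_eq {β : Type} [Fintype β] (p : Bool → β → ℝ) (hp : ∀ x y, 0 ≤ p x y) :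
    condEnt p * Real.log 2
      = ∑ y : β, (p false y + p true y) * binEntropy (p true y / (p false y + p true y)) := by
  have hlog2 : Real.log 2 ≠ 0 := by positivity
  rw [condEnt, neg_mul, Finset.sum_mul]
  rw [← Finset.sum_neg_distrib]
  apply Finset.sum_congr rfl
  intro y _
  have hS : ∀ y : β, (∑ x' : Bool, p x' y) = p false y + p true y := by
    intro y; rw [Fintype.sum_bool]; ring
  rw [Fintype.sum_bool, hS, add_mul]
  have e : ∀ u v : ℝ, u * Real.logb 2 v * Real.log 2 = u * Real.log v := by
    intro u v; rw [Real.logb]; field_simp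
  rw [e, e, ← perY (p false y) (p true y) (hp false y) (hp true y)]
  ring

lemma jensen_sq {γ : Type} [Fintype γ] (w f : γ → ℝ) (hw : ∀ y, 0 ≤ w y)
    (hsum : ∑ y : γ, w y = 1) :
    (∑ y : γ, w y * f y)^2 ≤ ∑ y : γ, w y * (f y)^2 := by
  set m := ∑ y : γ, w y * f y with hm
  have expand : ∑ y : γ, w y * (f y - m)^2
      = (∑ y : γ, w y * (f y)^2) - 2*m*(∑ y : γ, w y * f y) + m^2 * (∑ y : γ, w y) := by
    have e : ∀ y : γ, w y * (f y - m)^2 = w y * (f y)^2 - 2*m*(w y * f y) + m^2 * w y := by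
      intro y; ring
    simp_rw [e]
    rw [Finset.sum_add_distrib, Finset.sum_sub_distrib, ← Finset.mul_sum, ← Finset.mul_sum]
  have hnn : 0 ≤ ∑ y : γ, w y * (f y - m)^2 :=
    Finset.sum_nonneg fun y _ => mul_nonneg (hw y) (sq_nonneg _)
  rw [expand, hsum, ← hm] at hnn
  nlinarith

lemma log2_sq_num : (0.48:ℝ) < (Real.log 2)^2 := by
  nlinarith [Real.log_two_gt_d9]

lemma cube_num {ε : ℝ} (hε : 0 < ε) : ε^3/20 * Real.log 2 ≤ ε^3/8 * (Real.log 2)^3 := by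
  have hL : (0:ℝ) < Real.log 2 := by positivity
  have h3 : (Real.log 2)^3 = (Real.log 2)^2 * Real.log 2 := by ring
  have hε3 : (0:ℝ) < ε^3 := by positivity
  nlinarith [log2_sq_num, mul_pos hε3 hL]

/-- One-sided main lemma (natural-scale computation). -/
lemma main_side {ε : ℝ} (hε : 0 < ε) {β γ : Type} [Fintype β] [Fintype γ]
    (p : Bool → β → ℝ) (q : Bool → γ → ℝ)
    (hp : ∀ x y, 0 ≤ p x y) (hq : ∀ x y, 0 ≤ q x y)
    (hps : (∑ x : Bool, ∑ y : β, p x y) = 1) (hqs : (∑ x : Bool, ∑ y : γ, q x y) = 1)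
    (hcp : condEnt p < 1 - ε) (hcq : ε < condEnt q) :
    condEnt p + ε^3/20 ≤
      condEnt (fun s (yy : β × γ) => ∑ x : Bool, p x yy.1 * q (xor s x) yy.2) := by
  have hlog2pos : (0:ℝ) < Real.log 2 := by positivity
  set r : Bool → β × γ → ℝ := fun s yy => ∑ x : Bool, p x yy.1 * q (xor s x) yy.2 with hr
  have hrnn : ∀ s yy, 0 ≤ r s yy := by
    intro s yy
    exact Finset.sum_nonneg fun x _ => mul_nonneg (hp x yy.1) (hq (xor s x) yy.2)
  -- weights
  set P : β → ℝ := fun y => p false y + p true y with hP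
  set Q : γ → ℝ := fun y => q false y + q true y with hQ
  have hPnn : ∀ y, 0 ≤ P y := fun y => add_nonneg (hp false y) (hp true y)
  have hQnn : ∀ y, 0 ≤ Q y := fun y => add_nonneg (hq false y) (hq true y)
  have hPsum : ∑ y : β, P y = 1 := by
    rw [Fintype.sum_bool] at hps
    rw [hP]; rw [Finset.sum_add_distrib]; linarith [hps]
  have hQsum : ∑ y : γ, Q y = 1 := by
    rw [Fintype.sum_bool] at hqs
    rw [hQ]; rw [Finset.sum_add_distrib]; linarith [hqs]
  set a : β → ℝ := fun y => p true y / P y with ha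
  set b : γ → ℝ := fun y => q true y / Q y with hb
  have ham : ∀ y, a y ∈ Set.Icc (0:ℝ) 1 := by
    intro y
    rcases eq_or_lt_of_le (hPnn y) with h | h
    · constructor
      · rw [ha]; simp [← h]
      · rw [ha]; simp [← h]
    · constructor
      · exact div_nonneg (hp true y) (hPnn y)
      · rw [ha, div_le_one h]
        show p true y ≤ p false y + p true y
        linarith [hp false y]
  have hbm : ∀ y, b y ∈ Set.Icc (0:ℝ) 1 := by
    intro y
    rcases eq_or_lt_of_le (hQnn y) with h | h
    · constructor
      · rw [hb]; simp [← h]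
      · rw [hb]; simp [← h]
    · constructor
      · exact div_nonneg (hq true y) (hQnn y)
      · rw [hb, div_le_one h]
        show q true y ≤ q false y + q true y
        linarith [hq false y]
  -- entropies in natural scale
  set E1 : ℝ := condEnt p * Real.log 2 with hE1
  set E2 : ℝ := condEnt q * Real.log 2 with hE2
  have hE1eq : E1 = ∑ y : β, P y * binEntropy (a y) := condEnt_eq p hp
  have hE2eq : E2 = ∑ y : γ, Q y * binEntropy (b y) := condEnt_eq q hq
  -- conditional entropy of the convolution
  have hreq : condEnt r * Real.log 2
      = ∑ y : β × γ, (r false y + r true y) * binEntropy (r true y / (r false y + r true y)) :=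
    condEnt_eq r hrnn
  -- pointwise bound on each term
  have hterm : ∀ y1 : β, ∀ y2 : γ,
      P y1 * Q y2 * (binEntropy (a y1)
        + (1/8) * (Real.log 2 - binEntropy (a y1)) * (binEntropy (b y2))^2)
      ≤ (r false (y1,y2) + r true (y1,y2))
          * binEntropy (r true (y1,y2) / (r false (y1,y2) + r true (y1,y2))) := by
    intro y1 y2
    have hsum : r false (y1,y2) + r true (y1,y2) = P y1 * Q y2 := by
      rw [hr]; simp only [Fintype.sum_bool]
      rw [hP, hQ]; simp [Bool.xor]; ring
    rcases eq_or_lt_of_le (hPnn y1) with h1 | h1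
    · rw [hsum, ← h1]; simp [← h1]
    rcases eq_or_lt_of_le (hQnn y2) with h2 | h2
    · rw [hsum, ← h2]; simp [← h2]
    have hPQ : 0 < P y1 * Q y2 := mul_pos h1 h2
    have hc : r true (y1,y2) / (r false (y1,y2) + r true (y1,y2))
        = a y1 + b y2 - 2 * a y1 * b y2 := by
      rw [hsum, hr]; simp only [Fintype.sum_bool]
      rw [ha, hb, hP, hQ]
      simp [Bool.xor]
      have h1' : p false y1 + p true y1 ≠ 0 := ne_of_gt h1
      have h2' : q false y2 + q true y2 ≠ 0 := ne_of_gt h2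
      field_simp
      ring
    rw [hc, hsum]
    have := pointwise_gain (ham y1) (hbm y2)
    exact mul_le_mul_of_nonneg_left this (le_of_lt hPQ)
  -- sum the bound
  have hsum1 : ∑ y : β × γ, P y.1 * Q y.2 * (binEntropy (a y.1)
        + (1/8) * (Real.log 2 - binEntropy (a y.1)) * (binEntropy (b y.2))^2)
      ≤ condEnt r * Real.log 2 := by
    rw [hreq]
    exact Finset.sum_le_sum fun y _ => hterm y.1 y.2
  set SQ : ℝ := ∑ y2 : γ, Q y2 * (binEntropy (b y2))^2 with hSQdef
  have hSQrow : ∀ y1 : β, ∑ y2 : γ, P y1 * Q y2 * (binEntropy (a y1)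
        + (1/8) * (Real.log 2 - binEntropy (a y1)) * (binEntropy (b y2))^2)
      = P y1 * binEntropy (a y1)
        + (P y1 * (Real.log 2 - binEntropy (a y1))) * ((1/8) * SQ) := by
    intro y1
    have e : ∀ y2 : γ, P y1 * Q y2 * (binEntropy (a y1)
          + (1/8) * (Real.log 2 - binEntropy (a y1)) * (binEntropy (b y2))^2)
        = P y1 * binEntropy (a y1) * Q y2
          + (P y1 * (Real.log 2 - binEntropy (a y1))) * ((1/8) * (Q y2 * (binEntropy (b y2))^2)) := by
      intro y2; ring
    simp_rw [e]
    rw [Finset.sum_add_distrib, ← Finset.mul_sum, ← Finset.mul_sum, hQsum, mul_one, ← Finset.mul_sum]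
  have hrowsum : ∑ y1 : β, P y1 * (Real.log 2 - binEntropy (a y1)) = Real.log 2 - E1 := by
    simp_rw [mul_sub]
    rw [Finset.sum_sub_distrib, ← Finset.sum_mul, hPsum, one_mul, ← hE1eq]
  have hsplit : ∑ y : β × γ, P y.1 * Q y.2 * (binEntropy (a y.1)
        + (1/8) * (Real.log 2 - binEntropy (a y.1)) * (binEntropy (b y.2))^2)
      = E1 + (Real.log 2 - E1) * ((1/8) * SQ) := by
    rw [Fintype.sum_prod_type]
    simp_rw [hSQrow]
    rw [Finset.sum_add_distrib, ← hE1eq, ← Finset.sum_mul, hrowsum]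
  -- Jensen
  have hjensen : E2^2 ≤ SQ := by
    rw [hSQdef, hE2eq]
    exact jensen_sq Q (fun y => binEntropy (b y)) hQnn hQsum
  -- numeric assembly
  have hE1lt : E1 < (1 - ε) * Real.log 2 := by
    rw [hE1]; exact mul_lt_mul_of_pos_right hcp hlog2pos
  have hE2gt : ε * Real.log 2 < E2 := by
    rw [hE2]; exact mul_lt_mul_of_pos_right hcq hlog2pos
  have hcoef : ε * Real.log 2 ≤ Real.log 2 - E1 := by
    have e : (1-ε)*Real.log 2 = Real.log 2 - ε*Real.log 2 := by ring
    linarith [hE1lt]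
  have hE2sq : (ε * Real.log 2)^2 ≤ E2^2 :=
    pow_le_pow_left₀ (le_of_lt (mul_pos hε hlog2pos)) (le_of_lt hE2gt) 2
  have hfinal : E1 + (ε * Real.log 2) * ((1/8) * (ε * Real.log 2)^2) ≤ condEnt r * Real.log 2 := by
    have step1 : E1 + (Real.log 2 - E1) * ((1/8) * SQ) ≤ condEnt r * Real.log 2 := by
      rw [← hsplit]; exact hsum1
    have hSQnn : (ε * Real.log 2)^2 ≤ SQ := le_trans hE2sq hjensen
    have hcoefnn : 0 ≤ Real.log 2 - E1 := le_trans (le_of_lt (mul_pos hε hlog2pos)) hcoef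
    have s1 : (ε * Real.log 2) * ((1/8) * (ε * Real.log 2)^2)
        ≤ (Real.log 2 - E1) * ((1/8) * (ε * Real.log 2)^2) :=
      mul_le_mul_of_nonneg_right hcoef (by positivity)
    have s2 : (Real.log 2 - E1) * ((1/8) * (ε * Real.log 2)^2)
        ≤ (Real.log 2 - E1) * ((1/8) * SQ) :=
      mul_le_mul_of_nonneg_left (by linarith [hSQnn]) hcoefnn
    linarith [step1]
  have key : (condEnt p + ε^3/20) * Real.log 2 ≤ condEnt r * Real.log 2 := by
    have expand : E1 + (ε * Real.log 2) * ((1/8) * (ε * Real.log 2)^2)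
        = condEnt p * Real.log 2 + (ε^3/8) * (Real.log 2)^3 := by rw [hE1]; ring
    have hcube := cube_num hε
    have e2 : (condEnt p + ε^3/20) * Real.log 2
        = condEnt p * Real.log 2 + ε^3/20 * Real.log 2 := by ring
    linarith [hfinal]
  exact le_of_mul_le_mul_right key hlog2pos

/-- The convolution's conditional entropy is symmetric in the two channels. -/
lemma condEnt_conv_comm {β γ : Type} [Fintype β] [Fintype γ]
    (p : Bool → β → ℝ) (q : Bool → γ → ℝ) :
    condEnt (fun s (yy : γ × β) => ∑ x : Bool, q x yy.1 * p (xor s x) yy.2)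
      = condEnt (fun s (yy : β × γ) => ∑ x : Bool, p x yy.1 * q (xor s x) yy.2) := by
  have hpoint : ∀ s : Bool, ∀ y1 : β, ∀ y2 : γ,
      (∑ x : Bool, q x y2 * p (xor s x) y1) = ∑ x : Bool, p x y1 * q (xor s x) y2 := by
    intro s y1 y2
    cases s <;> simp [Fintype.sum_bool] <;> ring
  rw [condEnt, condEnt, neg_inj]
  rw [← (Equiv.prodComm β γ).sum_comp]
  apply Finset.sum_congr rfl
  intro yy _
  simp only [Equiv.prodComm_apply, Prod.fst_swap, Prod.snd_swap]
  simp_rw [hpoint]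

/-- Strict polarization: for every `ε > 0` there is `δ(ε) > 0` such that for any
independent pair `(X₁,Y₁)`, `(X₂,Y₂)` with binary inputs, if both conditional
entropies lie in `(ε, 1-ε)` then
`H(X₁+X₂|Y₁,Y₂) ≥ max(H(X₁|Y₁), H(X₂|Y₂)) + δ`. -/
theorem strict_polarization :
    ∀ ε : ℝ, 0 < ε → ∃ δ : ℝ, 0 < δ ∧
      ∀ (β γ : Type) [Fintype β] [Fintype γ]
        (p : Bool → β → ℝ) (q : Bool → γ → ℝ),
        (∀ x y, 0 ≤ p x y) → (∀ x y, 0 ≤ q x y) →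
        (∑ x : Bool, ∑ y : β, p x y) = 1 → (∑ x : Bool, ∑ y : γ, q x y) = 1 →
        ε < condEnt p → condEnt p < 1 - ε →
        ε < condEnt q → condEnt q < 1 - ε →
        max (condEnt p) (condEnt q) + δ ≤
          condEnt (fun s (yy : β × γ) => ∑ x : Bool, p x yy.1 * q (xor s x) yy.2) := by
  intro ε hε
  refine ⟨ε^3/20, by positivity, ?_⟩
  intro β γ _ _ p q hp hq hps hqs hp0 hp1 hq0 hq1
  have h1 := main_side hε p q hp hq hps hqs hp1 hq0
  have h2 := main_side hε q p hq hp hqs hps hq1 hp0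
  rw [condEnt_conv_comm p q] at h2
  rcases max_cases (condEnt p) (condEnt q) with ⟨he, _⟩ | ⟨he, _⟩ <;> rw [he] <;> linarith
end

section
/- Let m be a positive integer and let 𝒜 be a collection of subsets of {1,...,m}. Suppose that every maximal increasing chain of subsets ∅ = A₀ ⊆ A₁ ⊆ ... ⊆ A_m = {1,...,m} (with |A_i| = i) contains at most K members of 𝒜. Then |𝒜| ≤ K · binom(m, ⌊m/2⌋). -/
/-!
Double count the pairs `(A, π)` with `A ∈ 𝒜` lying on the maximal chain of the permutation `π`.
Each of the `m!` chains contains at most `K` members of `𝒜`, while a set of size `k` lies on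
`k! (m - k)! ≥ ⌊m/2⌋! ⌈m/2⌉!` chains; and `m! = binom(m, ⌊m/2⌋) ⌊m/2⌋! ⌈m/2⌉!`.
-/

open Finset Nat

section PermImage

variable {α : Type*} [DecidableEq α]

theorem Finset.image_perm_eq_iff {s t : Finset α} {π : Equiv.Perm α} :
    s.image π = t ↔ ∀ x, x ∈ s ↔ π x ∈ t := by
  constructor
  · rintro rfl x
    simp
  · intro h
    ext y
    rw [mem_image]
    exact ⟨fun ⟨x, hx, hxy⟩ => hxy ▸ (h x).1 hx,
      fun hy => ⟨π.symm y, (h _).2 (by simpa using hy), π.apply_symm_apply y⟩⟩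

variable (s t : Finset α)

def Equiv.Perm.mapsOntoEquivProd :
    { π : Equiv.Perm α // ∀ x, x ∈ s ↔ π x ∈ t } ≃
      ({ x // x ∈ s } ≃ { x // x ∈ t }) × ({ x // x ∉ s } ≃ { x // x ∉ t }) where
  toFun π := (π.1.subtypeEquiv π.2, π.1.subtypeEquiv fun x => not_congr (π.2 x))
  invFun ef := ⟨Equiv.subtypeCongr ef.1 ef.2, fun x => by
    by_cases hx : x ∈ s
    · simp [Equiv.subtypeCongr, hx]
    · simpa [Equiv.subtypeCongr, hx] using (ef.2 ⟨x, hx⟩).2⟩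
  left_inv π := by
    ext x
    by_cases hx : x ∈ s <;> simp [Equiv.subtypeCongr, hx]
  right_inv ef := by
    ext x <;> simp [Equiv.subtypeCongr, x.2]

theorem Finset.card_filter_image_perm_eq [Fintype α] (h : #s = #t) :
    #{π : Equiv.Perm α | s.image π = t} = (#s)! * (Fintype.card α - #s)! := by
  simp only [Finset.image_perm_eq_iff]
  rw [← Fintype.card_subtype, Fintype.card_congr (Equiv.Perm.mapsOntoEquivProd s t),
    Fintype.card_prod, Fintype.card_equiv (s.equivOfCardEq h),
    Fintype.card_equiv (Fintype.equivOfCardEq (by simp [Fintype.card_subtype_compl, h]))]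
  simp [Fintype.card_subtype_compl]

end PermImage

theorem Nat.factorial_mul_factorial_middle_le {n k : ℕ} (hk : k ≤ n) :
    (n / 2)! * (n - n / 2)! ≤ k ! * (n - k)! := by
  have hmid := choose_mul_factorial_mul_factorial (div_le_self n 2)
  have hk' := choose_mul_factorial_mul_factorial hk
  refine le_of_mul_le_mul_left ?_ (choose_pos (div_le_self n 2))
  calc n.choose (n / 2) * ((n / 2)! * (n - n / 2)!) = n.choose k * (k ! * (n - k)!) := by
        rw [← mul_assoc, ← mul_assoc, hmid, hk']
    _ ≤ n.choose (n / 2) * (k ! * (n - k)!) := by gcongr; exact choose_le_middle k n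

def permChain {m : ℕ} (π : Equiv.Perm (Fin m)) (i : ℕ) : Finset (Fin m) :=
  (univ.filter fun j : Fin m => (j : ℕ) < i).image π

theorem card_filter_permChain_card_eq {m : ℕ} (A : Finset (Fin m)) :
    #{π : Equiv.Perm (Fin m) | permChain π #A = A} = (#A)! * (m - #A)! := by
  have hinit : #(univ.filter fun j : Fin m => (j : ℕ) < #A) = #A := by
    rw [Fin.card_filter_val_lt, min_eq_right (by simpa using card_le_univ A)]
  have hcard := card_filter_image_perm_eq _ A hinit
  rw [hinit, Fintype.card_fin] at hcard
  exact hcard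

theorem card_filter_permChain_card_eq_le {m : ℕ} (π : Equiv.Perm (Fin m))
    (𝒜 : Finset (Finset (Fin m))) :
    #{A ∈ 𝒜 | permChain π #A = A} ≤ #{i ∈ range (m + 1) | permChain π i ∈ 𝒜} := by
  refine (card_le_card ?_).trans (card_image_le (f := permChain π))
  intro A hA
  rw [mem_filter] at hA
  refine mem_image.2 ⟨#A, mem_filter.2 ⟨?_, by rw [hA.2]; exact hA.1⟩, hA.2⟩
  simpa [Nat.lt_succ_iff] using card_le_univ A

/-- If every maximal increasing chain of subsets of an `m`-element set contains at
most `K` members of `𝒜`, then `|𝒜| ≤ K·binom(m, ⌊m/2⌋)`.  Chains are indexed by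
permutations `π`, the `i`-th set of the chain being the image under `π` of the
first `i` indices. -/
theorem family_card_le_of_chain_bound (m K : ℕ) (𝒜 : Finset (Finset (Fin m)))
    (hK : ∀ π : Equiv.Perm (Fin m),
      ((Finset.range (m + 1)).filter (fun i =>
        (Finset.univ.filter (fun j : Fin m => (j : ℕ) < i)).image π ∈ 𝒜)).card ≤ K) :
    𝒜.card ≤ K * Nat.choose m (m / 2) := by
  set c := (m / 2)! * (m - m / 2)!
  let onChain (A : Finset (Fin m)) (π : Equiv.Perm (Fin m)) : Prop := permChain π #A = A
  have hperms : ∀ A ∈ 𝒜, c ≤ #(univ.bipartiteAbove onChain A) := by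
    intro A _
    rw [bipartiteAbove, card_filter_permChain_card_eq]
    exact factorial_mul_factorial_middle_le (by simpa using card_le_univ A)
  have hchains : ∀ π ∈ univ, #(𝒜.bipartiteBelow onChain π) ≤ K := fun π _ =>
    (card_filter_permChain_card_eq_le π 𝒜).trans (hK π)
  have hcount : #𝒜 * c ≤ m ! * K := by
    simpa [Fintype.card_perm] using card_mul_le_card_mul onChain hperms hchains
  rw [← choose_mul_factorial_mul_factorial (div_le_self m 2)] at hcount
  refine Nat.le_of_mul_le_mul_right (c := c) ?_ (mul_pos (factorial_pos _) (factorial_pos _))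
  calc #𝒜 * c ≤ _ := hcount
    _ = K * m.choose (m / 2) * c := by ring
end

section
/- Let m ≥ 1 and A ⊆ {1,...,m}. In the total order on subsets of {1,...,m+1} (A < B iff |A| > |B|, or equal sizes and decreasing-enumeration lexicographic comparison), the following containments hold: (1) {A ∪ {m+1}} ∪ {A' ⊆ [m] : A' < A} ∪ {A' ∪ {m+1} : A' ⊆ [m], A' < A} ⊆ {A' ⊆ [m+1] : A' < A}; and (2) {A' ⊆ [m+1] : A' < A ∪ {m+1}} ⊆ {A' ⊆ [m] : A' < A} ∪ {A' ∪ {m+1} : A' ⊆ [m], A' < A}. -/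
lemma sort_insert_max (a : ℕ) (S : Finset ℕ) (h : ∀ b ∈ S, b < a) :
    (insert a S).sort (· ≤ ·) = S.sort (· ≤ ·) ++ [a] := by
  have ha : a ∉ S := fun hmem => lt_irrefl a (h a hmem)
  refine (fun hp hs => List.Perm.eq_of_pairwise' (r := (· ≤ ·)) (Finset.pairwise_sort _ _) hs hp) ?_ ?_
  · exact ((Finset.sort_perm_toList _ _).trans (Finset.toList_insert ha)).trans
      ((List.Perm.cons a (Finset.sort_perm_toList _ _).symm).trans
        (List.perm_append_singleton a _).symm)
  · rw [List.pairwise_append]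
    refine ⟨Finset.pairwise_sort _ _, List.pairwise_singleton _ a, ?_⟩
    intro x hx y hy
    simp at hy; subst hy
    exact (h x ((Finset.mem_sort _).mp hx)).le

/-- The two containments of families of subsets of `{1,...,m+1}`:
(1) `{A∪{m+1}} ∪ {A' ⊆ [m] : A' < A} ∪ {A'∪{m+1} : A' ⊆ [m], A' < A}
     ⊆ {A' ⊆ [m+1] : A' < A}`;
(2) `{A' ⊆ [m+1] : A' < A∪{m+1}} ⊆ {A' ⊆ [m] : A' < A} ∪ {A'∪{m+1} : A' ⊆ [m], A' < A}`. -/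
theorem order_containments (m : ℕ) (hm : 1 ≤ m) (A : Finset ℕ)
    (hA : A ⊆ Finset.Icc 1 m) :
    (({insert (m + 1) A} : Set (Finset ℕ))
        ∪ {A' | A' ⊆ Finset.Icc 1 m ∧ subsetLT A' A}
        ∪ {B | ∃ A' : Finset ℕ, A' ⊆ Finset.Icc 1 m ∧ subsetLT A' A ∧
            B = insert (m + 1) A'}
      ⊆ {A' | A' ⊆ Finset.Icc 1 (m + 1) ∧ subsetLT A' A}) ∧
    ({A' | A' ⊆ Finset.Icc 1 (m + 1) ∧ subsetLT A' (insert (m + 1) A)}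
      ⊆ {A' | A' ⊆ Finset.Icc 1 m ∧ subsetLT A' A}
        ∪ {B | ∃ A' : Finset ℕ, A' ⊆ Finset.Icc 1 m ∧ subsetLT A' A ∧
            B = insert (m + 1) A'}) := by
  have hsub : Finset.Icc 1 m ⊆ Finset.Icc 1 (m + 1) :=
    Finset.Icc_subset_Icc_right (by omega)
  have hnot : ∀ S : Finset ℕ, S ⊆ Finset.Icc 1 m → (m + 1) ∉ S := by
    intro S hS hmem
    have := hS hmem
    simp [Finset.mem_Icc] at this
  have hcard : ∀ S : Finset ℕ, S ⊆ Finset.Icc 1 m →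
      (insert (m + 1) S).card = S.card + 1 :=
    fun S hS => Finset.card_insert_of_notMem (hnot S hS)
  have hrev : ∀ S : Finset ℕ, S ⊆ Finset.Icc 1 m →
      ((insert (m + 1) S).sort (· ≤ ·)).reverse = (m + 1) :: (S.sort (· ≤ ·)).reverse := by
    intro S hS
    rw [sort_insert_max _ _ (fun b hb => by
      have := hS hb; simp [Finset.mem_Icc] at this; omega)]
    simp
  have hinssub : ∀ S : Finset ℕ, S ⊆ Finset.Icc 1 m →
      insert (m + 1) S ⊆ Finset.Icc 1 (m + 1) := by
    intro S hS
    rw [Finset.insert_subset_iff]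
    exact ⟨by simp [Finset.mem_Icc], fun x hx => hsub (hS hx)⟩
  constructor
  · intro B hB
    rcases hB with (hB | hB) | hB
    · rcases hB with rfl
      refine ⟨hinssub A hA, Or.inl ?_⟩
      rw [hcard A hA]; omega
    · exact ⟨hB.1.trans hsub, hB.2⟩
    · obtain ⟨A', hA', hlt, rfl⟩ := hB
      refine ⟨hinssub A' hA', Or.inl ?_⟩
      rw [hcard A' hA']
      rcases hlt with h | ⟨hc, _⟩ <;> omega
  · rintro A' ⟨hA'sub, hlt⟩
    by_cases hm1 : (m + 1) ∈ A'
    · right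
      set A'' := A'.erase (m + 1) with hA''def
      have hA'' : A'' ⊆ Finset.Icc 1 m := by
        intro x hx
        have hx1 := Finset.mem_of_mem_erase hx
        have hx2 := Finset.ne_of_mem_erase hx
        have := hA'sub hx1
        simp [Finset.mem_Icc] at this ⊢
        omega
      have hins : insert (m + 1) A'' = A' := Finset.insert_erase hm1
      refine ⟨A'', hA'', ?_, hins.symm⟩
      rcases hlt with h | ⟨hc, hlex⟩
      · left
        rw [hcard A hA, ← hins, hcard A'' hA''] at h
        omega
      · right
        rw [← hins, hcard A'' hA'', hcard A hA] at hc
        refine ⟨by omega, ?_⟩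
        rw [← hins, hrev A'' hA'', hrev A hA] at hlex
        exact List.lex_cons_iff.mp hlex
    · left
      refine ⟨?_, Or.inl ?_⟩
      · intro x hx
        have h2 := hA'sub hx
        have hne : x ≠ m + 1 := fun e => hm1 (e ▸ hx)
        simp [Finset.mem_Icc] at h2 ⊢
        omega
      · rcases hlt with h | ⟨hc, _⟩
        · rw [hcard A hA] at h; omega
        · rw [hcard A hA] at hc; omega
end

section
/- Let X₁,...,X₈ be i.i.d. Bernoulli(p) random variables, and set Y₁ = X₁+...+X₈, Y₂ = X₁+X₂+X₃+X₄, Y₃ = X₁+X₂+X₅+X₆, Y₄ = X₁+X₃+X₅+X₇, Y₅ = X₁+X₂ (all sums mod 2). Then H(Y₄ | Y₁, Y₂, Y₃) ≥ H(Y₅ | Y₁, Y₂, Y₃, Y₄). -/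
open Finset

/-- The joint pmf of eight i.i.d. Bernoulli(p) bits. -/
noncomputable def bern8 (p : ℝ) (x : Fin 8 → ZMod 2) : ℝ :=
  ∏ i : Fin 8, (if x i = 1 then p else 1 - p)

/- ### Auxiliary lemmas -/

lemma logsum {ι : Type} [Fintype ι] (a b : ι → ℝ) (ha : ∀ i, 0 ≤ a i) (hab : ∀ i, a i ≤ b i) :
    (∑ i, a i) * Real.log ((∑ i, a i) / (∑ i, b i)) ≤ ∑ i, a i * Real.log (a i / b i) := by
  set A := ∑ i, a i with hA
  set B := ∑ i, b i with hB
  have hb : ∀ i, 0 ≤ b i := fun i => le_trans (ha i) (hab i)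
  have hA0 : 0 ≤ A := Finset.sum_nonneg fun i _ => ha i
  have hAB : A ≤ B := Finset.sum_le_sum fun i _ => hab i
  by_cases hAz : A = 0
  · have hai : ∀ i, a i = 0 := by
      intro i
      have h := (Finset.sum_eq_zero_iff_of_nonneg (fun i _ => ha i)).mp hAz
      exact h i (Finset.mem_univ i)
    rw [hAz]
    simp only [zero_mul]
    apply Finset.sum_nonneg
    intro i _
    rw [hai i]; simp
  · have hApos : 0 < A := lt_of_le_of_ne hA0 (Ne.symm hAz)
    have hBpos : 0 < B := lt_of_lt_of_le hApos hAB
    have key : ∀ i, a i - b i * (A / B) ≤ a i * Real.log (a i / b i) - a i * Real.log (A / B) := by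
      intro i
      by_cases haz : a i = 0
      · rw [haz]
        simp only [zero_mul, zero_sub, sub_zero, zero_div]
        have : 0 ≤ b i * (A / B) := mul_nonneg (hb i) (div_nonneg hA0 hBpos.le)
        simp [Real.log_zero]
        linarith
      · have hapos : 0 < a i := lt_of_le_of_ne (ha i) (Ne.symm haz)
        have hbpos : 0 < b i := lt_of_lt_of_le hapos (hab i)
        have hlog : Real.log ((A / B) / (a i / b i)) ≤ (A / B) / (a i / b i) - 1 :=
          Real.log_le_sub_one_of_pos (by positivity)
        have hlog2 : Real.log (a i / b i) - Real.log (A / B) ≥ 1 - (A / B) / (a i / b i) := by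
          rw [Real.log_div (by positivity) (by positivity)] at hlog
          linarith
        have h3 : a i * (1 - (A / B) / (a i / b i)) ≤
            a i * (Real.log (a i / b i) - Real.log (A / B)) :=
          mul_le_mul_of_nonneg_left hlog2 hapos.le
        have h4 : a i * (1 - (A / B) / (a i / b i)) = a i - b i * (A / B) := by
          field_simp
        rw [h4] at h3
        linarith [h3]
    have hsum := Finset.sum_le_sum (fun i (_ : i ∈ Finset.univ) => key i)
    have h1 : ∑ i, (a i - b i * (A / B)) = A - B * (A / B) := by
      rw [Finset.sum_sub_distrib, ← Finset.sum_mul]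
    have h2 : ∑ i, (a i * Real.log (a i / b i) - a i * Real.log (A / B))
        = (∑ i, a i * Real.log (a i / b i)) - A * Real.log (A / B) := by
      rw [Finset.sum_sub_distrib, ← Finset.sum_mul]
    rw [h1, h2] at hsum
    have : B * (A / B) = A := by field_simp
    rw [this] at hsum
    linarith

noncomputable def condEntN {α β : Type} [Fintype α] [Fintype β] (p : α → β → ℝ) : ℝ :=
  -∑ y : β, ∑ x : α, p x y * Real.log (p x y / ∑ x' : α, p x' y)

lemma condEnt_eq_s19 {α β : Type} [Fintype α] [Fintype β] (p : α → β → ℝ) :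
    condEnt p = condEntN p / Real.log 2 := by
  unfold condEnt condEntN
  rw [neg_div, Finset.sum_div]
  congr 1
  refine Finset.sum_congr rfl fun y _ => ?_
  rw [Finset.sum_div]
  refine Finset.sum_congr rfl fun x _ => ?_
  rw [Real.logb, mul_div_assoc]

/-- Conditioning reduces conditional entropy. -/
lemma condEnt_marginal {α β γ : Type} [Fintype α] [Fintype β] [Fintype γ]
    (q : α → β × γ → ℝ) (hq : ∀ a bc, 0 ≤ q a bc) :
    condEnt q ≤ condEnt (fun a b => ∑ c, q a (b, c)) := by
  rw [condEnt_eq_s19, condEnt_eq_s19]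
  have hl2 : (0:ℝ) < Real.log 2 := Real.log_pos one_lt_two
  apply div_le_div_of_nonneg_right ?_ hl2.le
  unfold condEntN
  rw [neg_le_neg_iff, Fintype.sum_prod_type]
  apply Finset.sum_le_sum
  intro b _
  refine le_trans (Finset.sum_le_sum ?_) (le_of_eq Finset.sum_comm)
  intro a _
  have h := logsum (fun c => q a (b, c)) (fun c => ∑ a', q a' (b, c))
    (fun c => hq a (b, c))
    (fun c => Finset.single_le_sum (f := fun a' => q a' (b, c)) (fun a' _ => hq a' (b, c))
      (Finset.mem_univ a))
  have hswap : ∑ c : γ, ∑ a' : α, q a' (b, c) = ∑ a' : α, ∑ c : γ, q a' (b, c) :=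
    Finset.sum_comm
  rw [hswap] at h
  simpa using h

/-- `condEnt` is invariant under a bijection of the conditioning variable together with a
fiberwise bijection of the main variable. -/
lemma condEnt_congr {α β β' : Type} [Fintype α] [Fintype β] [Fintype β']
    (q : α → β → ℝ) (e : β' ≃ β) (σ : β' → α ≃ α) :
    condEnt (fun a b' => q (σ b' a) (e b')) = condEnt q := by
  unfold condEnt
  congr 1
  rw [← Equiv.sum_comp e (fun y => ∑ x : α, q x y * Real.logb 2 (q x y / ∑ x' : α, q x' y))]
  refine Finset.sum_congr rfl fun b' _ => ?_
  have hden : ∑ x' : α, q ((σ b') x') (e b') = ∑ x' : α, q x' (e b') :=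
    Equiv.sum_comp (σ b') (fun x => q x (e b'))
  simp_rw [hden]
  exact Equiv.sum_comp (σ b')
    (fun z => q z (e b') * Real.logb 2 (q z (e b') / ∑ x' : α, q x' (e b')))

/-- The joint pmf of `(Y₄+Y₅ ; (Y₁,Y₂,Y₃), Y₄)`. -/
noncomputable def Jf (p : ℝ) : ZMod 2 → ((ZMod 2 × ZMod 2 × ZMod 2) × ZMod 2) → ℝ :=
  fun a bd => ∑ x : Fin 8 → ZMod 2,
    if ((x 1 + x 2 + x 4 + x 6 = a ∧
        (∑ i : Fin 8, x i, x 0 + x 1 + x 2 + x 3, x 0 + x 1 + x 4 + x 5) = bd.1)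
        ∧ x 0 + x 2 + x 4 + x 6 = bd.2)
    then bern8 p x else 0

/-- The swap of the first two coordinates. -/
def sw : (Fin 8 → ZMod 2) ≃ (Fin 8 → ZMod 2) where
  toFun x := fun i => x (Equiv.swap 0 1 i)
  invFun x := fun i => x (Equiv.swap 0 1 i)
  left_inv x := by funext i; simp
  right_inv x := by funext i; simp

/-- Flattening equivalence for the conditioning tuple. -/
def eFlat : (ZMod 2 × ZMod 2 × ZMod 2 × ZMod 2) ≃ ((ZMod 2 × ZMod 2 × ZMod 2) × ZMod 2) where
  toFun b := ((b.1, b.2.1, b.2.2.1), b.2.2.2)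
  invFun c := (c.1.1, c.1.2.1, c.1.2.2, c.2)
  left_inv := fun _ => rfl
  right_inv := fun _ => rfl

lemma zmod2_aux : ∀ x0 x1 x2 x4 x6 a b4 : ZMod 2,
    (x0 + x1 = a ∧ x0 + x2 + x4 + x6 = b4) ↔
      (x1 + x2 + x4 + x6 = b4 + a ∧ x0 + x2 + x4 + x6 = b4) := by decide

/-- With `Y₁ = X₁+⋯+X₈`, `Y₂ = X₁+X₂+X₃+X₄`, `Y₃ = X₁+X₂+X₅+X₆`,
`Y₄ = X₁+X₃+X₅+X₇`, `Y₅ = X₁+X₂` (mod 2) for i.i.d. Bernoulli(p) bits: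
`H(Y₄ | Y₁,Y₂,Y₃) ≥ H(Y₅ | Y₁,Y₂,Y₃,Y₄)`. -/
theorem rm_bsc_m3 (p : ℝ) (hp : 0 < p) (hp1 : p < 1) :
    condEnt (fun (a : ZMod 2) (b : ZMod 2 × ZMod 2 × ZMod 2 × ZMod 2) =>
        ∑ x : Fin 8 → ZMod 2,
          if (x 0 + x 1 = a ∧
              (∑ i : Fin 8, x i, x 0 + x 1 + x 2 + x 3,
                x 0 + x 1 + x 4 + x 5, x 0 + x 2 + x 4 + x 6) = b)
          then bern8 p x else 0)
      ≤ condEnt (fun (a : ZMod 2) (b : ZMod 2 × ZMod 2 × ZMod 2) =>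
        ∑ x : Fin 8 → ZMod 2,
          if (x 0 + x 2 + x 4 + x 6 = a ∧
              (∑ i : Fin 8, x i, x 0 + x 1 + x 2 + x 3, x 0 + x 1 + x 4 + x 5) = b)
          then bern8 p x else 0) := by
  have hbern : ∀ x : Fin 8 → ZMod 2, 0 ≤ bern8 p x := by
    intro x
    unfold bern8
    apply Finset.prod_nonneg
    intro i _
    split <;> linarith
  have hJ : ∀ a bd, 0 ≤ Jf p a bd := by
    intro a bd
    apply Finset.sum_nonneg
    intro x _
    split
    · exact hbern x
    · exact le_refl _
  -- Step 1: the LHS equals H(Y₄+Y₅ | Y₁,Y₂,Y₃,Y₄)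
  have hL : condEnt (fun (a : ZMod 2) (b : ZMod 2 × ZMod 2 × ZMod 2 × ZMod 2) =>
        ∑ x : Fin 8 → ZMod 2,
          if (x 0 + x 1 = a ∧
              (∑ i : Fin 8, x i, x 0 + x 1 + x 2 + x 3,
                x 0 + x 1 + x 4 + x 5, x 0 + x 2 + x 4 + x 6) = b)
          then bern8 p x else 0) = condEnt (Jf p) := by
    rw [show (fun (a : ZMod 2) (b : ZMod 2 × ZMod 2 × ZMod 2 × ZMod 2) =>
        ∑ x : Fin 8 → ZMod 2,
          if (x 0 + x 1 = a ∧
              (∑ i : Fin 8, x i, x 0 + x 1 + x 2 + x 3,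
                x 0 + x 1 + x 4 + x 5, x 0 + x 2 + x 4 + x 6) = b)
          then bern8 p x else 0)
        = (fun a b' => Jf p ((Equiv.addLeft b'.2.2.2) a) (eFlat b')) from ?_]
    · exact condEnt_congr (Jf p) eFlat (fun b' => Equiv.addLeft b'.2.2.2)
    · funext a b
      obtain ⟨b1, b2, b3, b4⟩ := b
      unfold Jf
      refine Finset.sum_congr rfl fun x _ => ?_
      refine if_congr ?_ rfl rfl
      simp only [Prod.mk.injEq, eFlat, Equiv.coe_fn_mk, Equiv.coe_addLeft]
      have key := zmod2_aux (x 0) (x 1) (x 2) (x 4) (x 6) a b4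
      tauto
  -- Step 2: conditioning on Y₄ reduces entropy
  have hmar : condEnt (Jf p) ≤ condEnt (fun a b => ∑ d, Jf p a (b, d)) :=
    condEnt_marginal (Jf p) hJ
  -- Step 3: the marginal equals the RHS (via the swap symmetry X₀ ↔ X₁)
  have hGR : (fun (a : ZMod 2) (b : ZMod 2 × ZMod 2 × ZMod 2) => ∑ d, Jf p a (b, d))
      = (fun (a : ZMod 2) (b : ZMod 2 × ZMod 2 × ZMod 2) =>
        ∑ x : Fin 8 → ZMod 2,
          if (x 0 + x 2 + x 4 + x 6 = a ∧
              (∑ i : Fin 8, x i, x 0 + x 1 + x 2 + x 3, x 0 + x 1 + x 4 + x 5) = b)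
          then bern8 p x else 0) := by
    funext a b
    -- first marginalize out d
    have hmarg : (∑ d, Jf p a (b, d)) = ∑ x : Fin 8 → ZMod 2,
        if (x 1 + x 2 + x 4 + x 6 = a ∧
            (∑ i : Fin 8, x i, x 0 + x 1 + x 2 + x 3, x 0 + x 1 + x 4 + x 5) = b)
        then bern8 p x else 0 := by
      unfold Jf
      rw [Finset.sum_comm]
      refine Finset.sum_congr rfl fun x _ => ?_
      by_cases hP : (x 1 + x 2 + x 4 + x 6 = a ∧
          (∑ i : Fin 8, x i, x 0 + x 1 + x 2 + x 3, x 0 + x 1 + x 4 + x 5) = b)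
      · simp [hP, Finset.sum_ite_eq]
      · simp [hP]
    rw [hmarg]
    -- now reindex the right-hand sum by the swap X₀ ↔ X₁
    conv_rhs => rw [← Equiv.sum_comp sw (fun x : Fin 8 → ZMod 2 =>
      if (x 0 + x 2 + x 4 + x 6 = a ∧
          (∑ i : Fin 8, x i, x 0 + x 1 + x 2 + x 3, x 0 + x 1 + x 4 + x 5) = b)
      then bern8 p x else 0)]
    refine Finset.sum_congr rfl fun x _ => ?_
    have hsx : ∀ i, sw x i = x (Equiv.swap 0 1 i) := fun i => rfl
    have e0 : Equiv.swap (0 : Fin 8) 1 0 = 1 := by decide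
    have e1 : Equiv.swap (0 : Fin 8) 1 1 = 0 := by decide
    have e2 : Equiv.swap (0 : Fin 8) 1 2 = 2 := by decide
    have e3 : Equiv.swap (0 : Fin 8) 1 3 = 3 := by decide
    have e4 : Equiv.swap (0 : Fin 8) 1 4 = 4 := by decide
    have e5 : Equiv.swap (0 : Fin 8) 1 5 = 5 := by decide
    have e6 : Equiv.swap (0 : Fin 8) 1 6 = 6 := by decide
    have hsum : (∑ i : Fin 8, x (Equiv.swap 0 1 i)) = ∑ i : Fin 8, x i :=
      Equiv.sum_comp (Equiv.swap 0 1) x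
    have hb : bern8 p (sw x) = bern8 p x := by
      unfold bern8
      simp only [hsx]
      exact Equiv.prod_comp (Equiv.swap 0 1) (fun i => if x i = 1 then p else 1 - p)
    simp only [hsx, e0, e1, e2, e3, e4, e5, e6] at hb ⊢
    rw [hsum, hb, add_comm (x 1) (x 0)]
  calc condEnt (fun (a : ZMod 2) (b : ZMod 2 × ZMod 2 × ZMod 2 × ZMod 2) =>
        ∑ x : Fin 8 → ZMod 2,
          if (x 0 + x 1 = a ∧
              (∑ i : Fin 8, x i, x 0 + x 1 + x 2 + x 3,
                x 0 + x 1 + x 4 + x 5, x 0 + x 2 + x 4 + x 6) = b)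
          then bern8 p x else 0)
      = condEnt (Jf p) := hL
    _ ≤ condEnt (fun a b => ∑ d, Jf p a (b, d)) := hmar
    _ = _ := by rw [hGR]
end
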